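/- arXiv:2504.02075 — 8 statements merged into one kernel-verified Lean document; each statement's English description precedes it below -/
import Mathlib

section
/- Let F ∈ ℝ[x, y] be an irreducible polynomial whose real zero set C = {(x, y) ∈ ℝ² : F(x, y) = 0} is nonempty. Suppose there exists a nonzero vector a ∈ ℝ² such that C + a = C, where C + a := {z + a : z ∈ C}. Then C is an affine line; equivalently, F has total degree 1. -/
/-!
Translating a point of `C` by multiples of `a` shows that `F` vanishes at `p + n • a` for every
`n : ℕ`, so the univariate polynomial `t ↦ F (p + t • a)` has infinitely many roots and `F`
vanishes on the whole line `p + ℝ a`. Solving the equation `ℓ = 0` of that line for one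
coordinate, `x = m(y)`, and viewing `F` in `ℝ[y][x]`, the polynomial `F` has the root `m`, so `ℓ`
divides `F`. Since `F` is irreducible and `ℓ` is not a unit, `F` is a nonzero constant multiple
of `ℓ`, which gives both its zero set and its total degree.
-/

open MvPolynomial

section

variable {R : Type*} [CommRing R]

theorem finSuccEquiv_rename_succ {n : ℕ} (m : MvPolynomial (Fin n) R) :
    finSuccEquiv R n (rename Fin.succ m) = Polynomial.C m := by
  rw [finSuccEquiv_apply, coe_eval₂Hom, eval₂_rename]
  exact (eval₂_comp_left Polynomial.C C X m).symm.trans (congrArg _ (eval₂_eta m))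

theorem X_zero_sub_rename_succ_dvd_iff {n : ℕ} (F : MvPolynomial (Fin (n + 1)) R)
    (m : MvPolynomial (Fin n) R) :
    X 0 - rename Fin.succ m ∣ F ↔ (finSuccEquiv R n F).eval m = 0 := by
  rw [← map_dvd_iff (finSuccEquiv R n), map_sub, finSuccEquiv_X_zero, finSuccEquiv_rename_succ,
    Polynomial.dvd_iff_isRoot, Polynomial.IsRoot]

theorem Associated.eval_eq_zero_iff {σ : Type*} {p q : MvPolynomial σ R} (h : Associated p q)
    (x : σ → R) : eval x p = 0 ↔ eval x q = 0 := by
  obtain ⟨u, rfl⟩ := h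
  rw [map_mul, (u.isUnit.map (eval x)).mul_left_eq_zero]

theorem Associated.totalDegree_eq [IsDomain R] {σ : Type*} {p q : MvPolynomial σ R}
    (h : Associated p q) : p.totalDegree = q.totalDegree := by
  obtain ⟨u, rfl⟩ := h
  rcases eq_or_ne p 0 with rfl | hp
  · simp
  rw [totalDegree_mul_of_isDomain hp u.ne_zero,
    (isUnit_iff_totalDegree_of_isReduced.mp u.isUnit).2, add_zero]

noncomputable def affineForm (α β γ : R) : MvPolynomial (Fin 2) R := C α * X 0 + C β * X 1 - C γ

@[simp]
theorem eval_affineForm (α β γ : R) (x : Fin 2 → R) :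
    eval x (affineForm α β γ) = α * x 0 + β * x 1 - γ := by
  simp [affineForm]

theorem affineForm_ne_C {α β : R} (hαβ : ¬(α = 0 ∧ β = 0)) (γ k : R) :
    affineForm α β γ ≠ C k := by
  intro h
  have h00 := congrArg (eval ![0, 0]) h
  have h10 := congrArg (eval ![1, 0]) h
  have h01 := congrArg (eval ![0, 1]) h
  simp only [eval_affineForm, eval_C, Matrix.cons_val_zero, Matrix.cons_val_one] at h00 h10 h01
  exact hαβ ⟨by linear_combination h10 - h00, by linear_combination h01 - h00⟩

theorem totalDegree_affineForm [Nontrivial R] {α β : R} (hαβ : ¬(α = 0 ∧ β = 0)) (γ : R) :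
    (affineForm α β γ).totalDegree = 1 := by
  refine le_antisymm ?_ (Nat.one_le_iff_ne_zero.mpr fun h => affineForm_ne_C hαβ γ _
    (totalDegree_eq_zero_iff_eq_C.mp h))
  have hmonomial (i : Fin 2) (c : R) : (C c * X i).totalDegree ≤ 1 :=
    (totalDegree_mul _ _).trans (by simp [totalDegree_X])
  calc (affineForm α β γ).totalDegree
      ≤ (C α * X 0 + C β * X 1 : MvPolynomial (Fin 2) R).totalDegree := totalDegree_sub_C_le _ _
    _ ≤ 1 := (totalDegree_add _ _).trans (max_le (hmonomial 0 α) (hmonomial 1 β))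

theorem not_isUnit_affineForm [IsDomain R] {α β : R} (hαβ : ¬(α = 0 ∧ β = 0)) (γ : R) :
    ¬IsUnit (affineForm α β γ) := fun h => by
  simpa [totalDegree_affineForm hαβ γ] using (isUnit_iff_totalDegree_of_isReduced.mp h).2

end

section

variable {K : Type*} [Field K]

theorem affineForm_dvd_of_eval_eq_zero_of_ne_zero [Infinite K] {F : MvPolynomial (Fin 2) K}
    {α β γ : K} (hα : α ≠ 0) (hF : ∀ x : Fin 2 → K, α * x 0 + β * x 1 = γ → eval x F = 0) :
    affineForm α β γ ∣ F := by
  set m : MvPolynomial (Fin 1) K := C (γ / α) - C (β / α) * X 0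
  have hform : affineForm α β γ = C α * (X 0 - rename Fin.succ m) := by
    have hdiv (c : K) : C α * C (c / α) = (C c : MvPolynomial (Fin 2) K) := by
      rw [← C_mul, mul_div_cancel₀ _ hα]
    simp only [affineForm, m, map_sub, map_mul, rename_C, rename_X, Fin.succ_zero_eq_one]
    linear_combination hdiv γ - X 1 * hdiv β
  rw [hform, (hα.isUnit.map C).mul_left_dvd, X_zero_sub_rename_succ_dvd_iff]
  refine MvPolynomial.funext fun x => ?_
  rw [eval_polynomial_eval_finSuccEquiv, map_zero]
  refine hF _ (show α * eval x m + β * x 0 = γ from ?_)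
  simp only [m, map_sub, map_mul, eval_C, eval_X]
  field_simp
  ring

theorem affineForm_dvd_of_eval_eq_zero [Infinite K] {F : MvPolynomial (Fin 2) K} {α β γ : K}
    (hαβ : ¬(α = 0 ∧ β = 0)) (hF : ∀ x : Fin 2 → K, α * x 0 + β * x 1 = γ → eval x F = 0) :
    affineForm α β γ ∣ F := by
  by_cases hα : α = 0
  swap
  · exact affineForm_dvd_of_eval_eq_zero_of_ne_zero hα hF
  -- otherwise `β ≠ 0`: swap the two variables
  set e := renameEquiv K (Equiv.swap (0 : Fin 2) 1)
  have he : e (affineForm β α γ) = affineForm α β γ := by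
    simp only [e, affineForm, renameEquiv_apply, map_sub, map_add, map_mul, rename_C, rename_X,
      Equiv.swap_apply_left, Equiv.swap_apply_right]
    ring
  rw [← he, ← e.apply_symm_apply F, map_dvd_iff]
  refine affineForm_dvd_of_eval_eq_zero_of_ne_zero (hαβ ⟨hα, ·⟩) fun x hx => ?_
  rw [renameEquiv_symm, renameEquiv_apply, eval_rename]
  exact hF _ (by simpa [add_comm] using hx)

theorem eval_add_smul_eq_zero_of_forall_nat [CharZero K] {σ : Type*} {F : MvPolynomial σ K}
    {p v : σ → K} (hF : ∀ n : ℕ, eval (p + (n : K) • v) F = 0) (t : K) :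
    eval (p + t • v) F = 0 := by
  set g : Polynomial K := aeval (fun i => Polynomial.C (p i) + Polynomial.X * Polynomial.C (v i)) F
  have hg (s : K) : g.eval s = eval (p + s • v) F := by
    rw [← Polynomial.coe_aeval_eq_eval, ← AlgHom.comp_apply, comp_aeval]
    simp only [Polynomial.coe_aeval_eq_eval, Polynomial.eval_add, Polynomial.eval_mul,
      Polynomial.eval_C, Polynomial.eval_X]
    rfl
  have hg0 : g = 0 := Polynomial.eq_zero_of_infinite_isRoot g <|
    Set.infinite_of_injective_forall_mem Nat.cast_injective fun n => by simp [hg, hF]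
  rw [← hg, hg0, Polynomial.eval_zero]

end

theorem exists_eq_add_smul_of_mul_sub_eq {v : Fin 2 → ℝ} (hv : v ≠ 0) {p x : Fin 2 → ℝ}
    (h : v 1 * x 0 - v 0 * x 1 = v 1 * p 0 - v 0 * p 1) : ∃ t : ℝ, x = p + t • v := by
  have hnorm : v 0 ^ 2 + v 1 ^ 2 ≠ 0 := by
    contrapose! hv
    ext i
    fin_cases i <;> simp <;> nlinarith [sq_nonneg (v 0), sq_nonneg (v 1)]
  -- `t` is the coordinate of the projection of `x - p` onto `v`
  refine ⟨(v 0 * (x 0 - p 0) + v 1 * (x 1 - p 1)) / (v 0 ^ 2 + v 1 ^ 2), ?_⟩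
  ext i
  fin_cases i <;> simp only [Fin.zero_eta, Fin.mk_one, Pi.add_apply, Pi.smul_apply, smul_eq_mul] <;>
    field_simp
  · linear_combination v 1 * h
  · linear_combination - v 0 * h

theorem affineForm_dvd_of_eval_add_smul_eq_zero {F : MvPolynomial (Fin 2) ℝ} {p v : Fin 2 → ℝ}
    (hv : v ≠ 0) (hF : ∀ t : ℝ, eval (p + t • v) F = 0) :
    affineForm (v 1) (-v 0) (v 1 * p 0 - v 0 * p 1) ∣ F := by
  refine affineForm_dvd_of_eval_eq_zero (fun h => hv ?_) fun x hx => ?_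
  · ext i
    fin_cases i
    exacts [neg_eq_zero.mp h.2, h.1]
  · obtain ⟨t, rfl⟩ :=
      exists_eq_add_smul_of_mul_sub_eq (p := p) (x := x) hv (by linear_combination hx)
    exact hF t

theorem stmt3 (F : MvPolynomial (Fin 2) ℝ) (hF : Irreducible F)
    (C : Set (ℝ × ℝ))
    (hC : C = {z : ℝ × ℝ | MvPolynomial.eval ![z.1, z.2] F = 0})
    (hne : C.Nonempty)
    (a : ℝ × ℝ) (ha : a ≠ 0)
    (hinv : (fun z : ℝ × ℝ => z + a) '' C = C) :
    (∃ α β γ : ℝ, ¬(α = 0 ∧ β = 0) ∧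
        C = {z : ℝ × ℝ | α * z.1 + β * z.2 = γ}) ∧
      F.totalDegree = 1 := by
  obtain ⟨p, hp⟩ := hne
  have hshift (n : ℕ) : p + n • a ∈ C := by
    induction n with
    | zero => simpa using hp
    | succ n ih => rw [succ_nsmul, ← add_assoc, ← hinv]; exact ⟨_, ih, rfl⟩
  have hline : ∀ t : ℝ, eval (![p.1, p.2] + t • ![a.1, a.2]) F = 0 :=
    eval_add_smul_eq_zero_of_forall_nat fun n => by
      have hn := hshift n
      rw [hC] at hn
      have hpoint : ![p.1, p.2] + (n : ℝ) • ![a.1, a.2] = ![(p + n • a).1, (p + n • a).2] := by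
        ext i
        fin_cases i <;> simp
      rw [hpoint]
      exact hn
  have hαβ : ¬(a.2 = 0 ∧ -a.1 = 0) := fun h => ha (Prod.ext (neg_eq_zero.mp h.2) h.1)
  have hdvd := affineForm_dvd_of_eval_add_smul_eq_zero (by simpa [Prod.ext_iff] using ha) hline
  simp only [Matrix.cons_val_zero, Matrix.cons_val_one] at hdvd
  have hassoc := ((hF.dvd_iff.mp hdvd).resolve_left (not_isUnit_affineForm hαβ _)).symm
  refine ⟨⟨a.2, -a.1, a.2 * p.1 - a.1 * p.2, hαβ, ?_⟩, ?_⟩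
  · ext z
    simp [hC, ← hassoc.eval_eq_zero_iff, sub_eq_zero]
  · rw [← hassoc.totalDegree_eq, totalDegree_affineForm hαβ]
end

section
/- Let F ∈ ℝ[x, y] be an irreducible polynomial with real zero set D = {(x, y) ∈ ℝ² : F(x, y) = 0}, and assume D ∩ (ℝ \ {0})² ≠ ∅. Let l ∈ ℝ \ {0} and let λ ∈ ℝ \ {0} have infinite multiplicative order (i.e., λ^n ≠ 1 for every positive integer n, equivalently λ ∉ {1, −1}). Define the map A : ℝ² → ℝ² by A(x, y) = (x + l, λ y). Then A(D) ≠ D. -/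
/-!
If `A(D) = D`, then `D` contains the whole forward orbit `(a + n l, λⁿ b)` of a point with
`b ≠ 0`. Writing `F = ∑ⱼ Fⱼ(x) yʲ`, this says that the exponential polynomial
`n ↦ ∑ⱼ Fⱼ(a + n l) bʲ (λʲ)ⁿ` vanishes on `ℕ`. As `λ` is not a root of unity, the bases `λʲ`
are pairwise distinct, and an exponential polynomial with distinct nonzero bases vanishes on `ℕ`
only if all its polynomial coefficients vanish. Hence `F = 0`, which is not irreducible.
-/

open Function Polynomial Polynomial.Bivariate Finset

namespace Polynomial

variable {R : Type*} [CommRing R]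

theorem sum_eval_C_mul_taylor_one_sub_C_mul_mul_pow_eq_zero {ι : Type*}
    {s : Finset ι} {μ : ι → R} {p : ι → R[X]}
    (h : ∀ n : ℕ, ∑ i ∈ s, (p i).eval (n : R) * μ i ^ n = 0) (ν : R) (n : ℕ) :
    ∑ i ∈ s, (C (μ i) * taylor 1 (p i) - C ν * p i).eval (n : R) * μ i ^ n = 0 :=
  calc _ = ∑ i ∈ s, (p i).eval ((n + 1 : ℕ) : R) * μ i ^ (n + 1)
          - ν * ∑ i ∈ s, (p i).eval (n : R) * μ i ^ n := by
        rw [Finset.mul_sum, ← Finset.sum_sub_distrib]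
        refine Finset.sum_congr rfl fun i _ => ?_
        simp only [eval_sub, eval_mul, eval_C, taylor_eval, Nat.cast_succ, pow_succ]
        ring
    _ = 0 := by rw [h, h, mul_zero, sub_zero]

theorem taylor_one_sub_self_eq_zero_or_natDegree_lt (p : R[X]) :
    taylor 1 p - p = 0 ∨ (taylor 1 p - p).natDegree < p.natDegree := by
  refine or_iff_not_imp_left.2 fun hne => natDegree_lt_natDegree hne ?_
  have hp : taylor 1 p ≠ 0 := fun h0 => hne (by simp_all [taylor_eq_zero])
  simpa [degree_taylor] using degree_sub_lt_left (degree_taylor p 1) hp (leadingCoeff_taylor 1 p)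

variable [IsDomain R]

theorem eq_zero_of_forall_eval_natCast_eq_zero [CharZero R] {p : R[X]}
    (h : ∀ n : ℕ, p.eval (n : R) = 0) : p = 0 :=
  p.eq_zero_of_infinite_isRoot <| Set.infinite_of_injective_forall_mem Nat.cast_injective h

theorem eq_zero_of_C_mul_taylor_one_sub_C_mul_eq_zero {p : R[X]} {μ ν : R}
    (hμν : μ ≠ ν) (h : C μ * taylor 1 p - C ν * p = 0) : p = 0 := by
  by_contra hp
  have hlc := congrArg leadingCoeff (sub_eq_zero.1 h)
  rw [leadingCoeff_mul, leadingCoeff_mul, leadingCoeff_C, leadingCoeff_C,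
    leadingCoeff_taylor] at hlc
  exact hμν (mul_right_cancel₀ (leadingCoeff_ne_zero.2 hp) hlc)

theorem eq_zero_of_forall_sum_eval_mul_pow_eq_zero [CharZero R] {ι : Type*} [DecidableEq ι]
    {s : Finset ι} {μ : ι → R} (hμ : Set.InjOn μ s) (hμ0 : ∀ i ∈ s, μ i ≠ 0) {p : ι → R[X]}
    (h : ∀ n : ℕ, ∑ i ∈ s, (p i).eval (n : R) * μ i ^ n = 0) : ∀ i ∈ s, p i = 0 := by
  induction s using Finset.induction_on generalizing p with
  | empty => simp
  | insert ν s hν ih =>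
    induction hd : (p ν).natDegree using Nat.strong_induction_on generalizing p with
    | _ d ihd =>
    -- The difference operator `f(n) ↦ f(n+1) - μ ν * f(n)` lowers the degree of the
    -- `ν`-coefficient and kills no other nonzero coefficient.
    let q i := C (μ i) * taylor 1 (p i) - C (μ ν) * p i
    have hq : ∀ n : ℕ, ∑ i ∈ insert ν s, (q i).eval (n : R) * μ i ^ n = 0 :=
      sum_eval_C_mul_taylor_one_sub_C_mul_mul_pow_eq_zero h (μ ν)
    have hqν : q ν = C (μ ν) * (taylor 1 (p ν) - p ν) := (mul_sub _ _ _).symm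
    have hqs : ∀ i ∈ s, q i = 0 := by
      rcases taylor_one_sub_self_eq_zero_or_natDegree_lt (p ν) with h0 | hlt
      · refine ih (hμ.mono (by simp)) (fun i hi => hμ0 i (mem_insert_of_mem hi)) fun n => ?_
        simpa [sum_insert hν, hqν, h0] using hq n
      · refine fun i hi => ihd _ ?_ hq rfl i (mem_insert_of_mem hi)
        rw [hqν, ← hd]
        exact (natDegree_C_mul_le _ _).trans_lt hlt
    have hps : ∀ i ∈ s, p i = 0 := fun i hi =>
      eq_zero_of_C_mul_taylor_one_sub_C_mul_eq_zero
        (fun hμi => hν (hμ (mem_coe.2 (mem_insert_of_mem hi))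
          (mem_coe.2 (mem_insert_self ν s)) hμi ▸ hi)) (hqs i hi)
    have hpν : p ν = 0 := eq_zero_of_forall_eval_natCast_eq_zero fun n => by
      have hn := h n
      rw [sum_insert hν, sum_eq_zero fun i hi => by simp [hps i hi], add_zero] at hn
      exact (mul_eq_zero.1 hn).resolve_right (pow_ne_zero _ (hμ0 ν (mem_insert_self ν s)))
    simpa [forall_mem_insert, hpν] using hps

end Polynomial

theorem Polynomial.Bivariate.evalEval_equivMvPolynomial_symm {R : Type*} [CommSemiring R]
    (x y : R) (F : MvPolynomial (Fin 2) R) :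
    ((equivMvPolynomial R).symm F).evalEval x y = MvPolynomial.eval ![x, y] F := by
  induction F using MvPolynomial.induction_on with
  | C a => simp
  | add F G hF hG => simp [hF, hG]
  | mul_X F i hF => fin_cases i <;> simp [hF, evalEval_C]

theorem Polynomial.evalEval_eq_sum {R : Type*} [CommSemiring R] (x y : R) (H : R[X][Y]) :
    H.evalEval x y = ∑ j ∈ H.support, (H.coeff j).eval x * y ^ j := by
  rw [evalEval, eval_eq_sum (p := H), sum_def, eval_finsetSum]
  simp only [eval_mul, eval_pow, eval_C]

theorem iterate_translate_mul_apply {R : Type*} [Semiring R] (l c : R) (z : R × R) (n : ℕ) :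
    (fun z : R × R => (z.1 + l, c * z.2))^[n] z = (z.1 + n * l, c ^ n * z.2) := by
  induction n with
  | zero => simp
  | succ n ih => simp [iterate_succ_apply', ih, add_mul, add_assoc, pow_succ', mul_assoc]

theorem pow_injective_of_forall_pow_ne_one {M₀ : Type*} [MonoidWithZero M₀] [IsCancelMulZero M₀]
    {x : M₀} (hx : x ≠ 0) (h : ∀ n : ℕ, 0 < n → x ^ n ≠ 1) : Injective (x ^ · : ℕ → M₀) := by
  have key : ∀ m k : ℕ, x ^ (m + k) = x ^ m → k = 0 := fun m k hmk => by
    by_contra hk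
    refine h k (Nat.pos_of_ne_zero hk) (mul_left_cancel₀ (pow_ne_zero m hx) ?_)
    rw [← pow_add, hmk, mul_one]
  intro m n hmn
  rcases le_total m n with hle | hle
  · obtain ⟨k, rfl⟩ := Nat.exists_eq_add_of_le hle
    simp [key m k hmn.symm]
  · obtain ⟨k, rfl⟩ := Nat.exists_eq_add_of_le hle
    simp [key n k hmn]

theorem eq_zero_of_forall_eval_add_mul_pow_mul_eq_zero {R : Type*} [CommRing R]
    [IsDomain R] [CharZero R] {F : MvPolynomial (Fin 2) R} {a b l c : R} (hl : l ≠ 0)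
    (hb : b ≠ 0) (hc : Injective (c ^ · : ℕ → R))
    (hF : ∀ n : ℕ, MvPolynomial.eval ![a + n * l, c ^ n * b] F = 0) : F = 0 := by
  set H := (equivMvPolynomial R).symm F
  have hc0 : c ≠ 0 := fun h0 => absurd (hc (show c ^ 1 = c ^ 2 by simp [h0])) (by norm_num)
  have hsum : ∀ n : ℕ, ∑ j ∈ H.support,
      ((H.coeff j).comp (C a + X * C l) * C (b ^ j)).eval (n : R) * (c ^ j) ^ n = 0 := fun n => by
    rw [← hF n, ← evalEval_equivMvPolynomial_symm, evalEval_eq_sum]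
    refine sum_congr rfl fun j _ => ?_
    simp only [eval_mul, eval_comp, eval_add, eval_C, eval_X]
    ring
  have hH : H = 0 := by
    ext j : 1
    rw [coeff_zero]
    by_contra hj
    have := Polynomial.eq_zero_of_forall_sum_eval_mul_pow_eq_zero hc.injOn
      (fun j _ => pow_ne_zero j hc0) hsum j (mem_support_iff.2 hj)
    exact hj (by simpa [Polynomial.comp_eq_zero_iff, hl, hb] using this)
  simpa [H] using hH

theorem stmt5 (F : MvPolynomial (Fin 2) ℝ) (hF : Irreducible F)
    (D : Set (ℝ × ℝ))
    (hD : D = {z : ℝ × ℝ | MvPolynomial.eval ![z.1, z.2] F = 0})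
    (hne : ∃ z ∈ D, z.1 ≠ 0 ∧ z.2 ≠ 0)
    (l : ℝ) (hl : l ≠ 0)
    (lam : ℝ) (hlam : lam ≠ 0)
    (hord : ∀ n : ℕ, 0 < n → lam ^ n ≠ 1) :
    (fun z : ℝ × ℝ => (z.1 + l, lam * z.2)) '' D ≠ D := by
  intro hAD
  obtain ⟨⟨a, b⟩, hab, -, hb⟩ := hne
  have horbit (n : ℕ) : (a + n * l, lam ^ n * b) ∈ D := by
    have := (hAD ▸ Set.mapsTo_image _ D : Set.MapsTo _ D D).iterate n hab
    rwa [iterate_translate_mul_apply] at this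
  refine hF.ne_zero (eq_zero_of_forall_eval_add_mul_pow_mul_eq_zero (a := a) hl hb
    (pow_injective_of_forall_pow_ne_one hlam hord) fun n => ?_)
  simpa [hD] using horbit n
end

section
/- Let p(t), q(t) ∈ ℝ[t] be polynomials with deg p ≤ δ and deg q ≤ δ, not both constant. Then there exists an irreducible polynomial f ∈ ℝ[x, y] of total degree at most 2δ such that f(p(t), q(t)) = 0 identically as a polynomial in t. In particular, the parametrized set C = {(p(t), q(t)) : t ∈ ℝ} is contained in the real zero set of an irreducible polynomial of degree at most 2δ. -/
noncomputable section

open Polynomial MvPolynomial Finset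

namespace Stmt6Aux

variable {σ R : Type*} [CommRing R] [IsDomain R]

/-- Homogenization map. -/
noncomputable def H : MvPolynomial σ R →+* Polynomial (MvPolynomial σ R) :=
  MvPolynomial.eval₂Hom ((Polynomial.C).comp MvPolynomial.C)
    (fun i => Polynomial.C (MvPolynomial.X i) * Polynomial.X)

lemma H_monomial (s : σ →₀ ℕ) (r : R) :
    H (MvPolynomial.monomial s r) =
      Polynomial.C (MvPolynomial.monomial s r) * Polynomial.X ^ (s.degree) := by
  classical
  rw [H, eval₂Hom_monomial]
  have h1 : (s.prod fun i e => (Polynomial.C (MvPolynomial.X (R := R) i) * Polynomial.X) ^ e)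
      = Polynomial.C (s.prod fun i e => MvPolynomial.X (R := R) i ^ e) * Polynomial.X ^ s.degree := by
    rw [Finsupp.prod]
    simp only [mul_pow]
    rw [Finset.prod_mul_distrib, Finset.prod_pow_eq_pow_sum]
    simp_rw [← Polynomial.C_pow]
    rw [← map_prod]
    rfl
  rw [h1, RingHom.comp_apply, ← mul_assoc, ← Polynomial.C_mul, ← MvPolynomial.monomial_eq]

lemma coeff_H (f : MvPolynomial σ R) (n : ℕ) :
    (H f).coeff n = MvPolynomial.homogeneousComponent n f := by
  classical
  conv_lhs => rw [f.as_sum]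
  rw [map_sum, Polynomial.finset_sum_coeff, homogeneousComponent_apply, Finset.sum_filter]
  refine Finset.sum_congr rfl fun s hs => ?_
  rw [H_monomial, Polynomial.coeff_C_mul, Polynomial.coeff_X_pow]
  by_cases h : s.degree = n
  · simp [h]
  · simp [h, Ne.symm h]

lemma homogeneousComponent_totalDegree_ne_zero {f : MvPolynomial σ R} (hf : f ≠ 0) :
    MvPolynomial.homogeneousComponent f.totalDegree f ≠ 0 := by
  classical
  have hsupp : f.support.Nonempty := MvPolynomial.support_nonempty.mpr hf
  obtain ⟨s, hs, hsup⟩ := Finset.exists_mem_eq_sup f.support hsupp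
    (fun m => m.sum fun _ e => e)
  have hdeg : s.degree = f.totalDegree := by
    rw [MvPolynomial.totalDegree, hsup]; rfl
  intro h0
  have := MvPolynomial.coeff_homogeneousComponent (φ := f) (n := f.totalDegree) s
  rw [h0, hdeg, if_pos rfl] at this
  exact (MvPolynomial.mem_support_iff.mp hs) this.symm

lemma H_ne_zero {f : MvPolynomial σ R} (hf : f ≠ 0) : H f ≠ 0 := by
  intro h
  apply homogeneousComponent_totalDegree_ne_zero hf
  rw [← coeff_H, h, Polynomial.coeff_zero]

lemma natDegree_H {f : MvPolynomial σ R} (hf : f ≠ 0) :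
    (H f).natDegree = f.totalDegree := by
  apply le_antisymm
  · rw [Polynomial.natDegree_le_iff_coeff_eq_zero]
    intro N hN
    rw [coeff_H]
    exact MvPolynomial.homogeneousComponent_eq_zero _ _ hN
  · apply Polynomial.le_natDegree_of_ne_zero
    rw [coeff_H]
    exact homogeneousComponent_totalDegree_ne_zero hf

lemma totalDegree_mul_eq {a b : MvPolynomial σ R} (ha : a ≠ 0) (hb : b ≠ 0) :
    (a * b).totalDegree = a.totalDegree + b.totalDegree := by
  have hab : a * b ≠ 0 := mul_ne_zero ha hb
  have := Polynomial.natDegree_mul (H_ne_zero ha) (H_ne_zero hb)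
  rw [← map_mul, natDegree_H hab, natDegree_H ha, natDegree_H hb] at this
  exact this

lemma totalDegree_le_of_dvd {a g : MvPolynomial σ R} (hg : g ≠ 0) (h : a ∣ g) :
    a.totalDegree ≤ g.totalDegree := by
  obtain ⟨b, rfl⟩ := h
  have ha : a ≠ 0 := fun h => hg (by simp [h])
  have hb : b ≠ 0 := fun h => hg (by simp [h])
  rw [totalDegree_mul_eq ha hb]
  exact Nat.le_add_right _ _

end Stmt6Aux

open Stmt6Aux in
theorem stmt6 (δ : ℕ) (p q : Polynomial ℝ)
    (hp : p.natDegree ≤ δ) (hq : q.natDegree ≤ δ)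
    (h : 0 < p.natDegree ∨ 0 < q.natDegree) :
    ∃ f : MvPolynomial (Fin 2) ℝ, Irreducible f ∧ f.totalDegree ≤ 2 * δ ∧
      ∀ t : ℝ, MvPolynomial.eval ![p.eval t, q.eval t] f = 0 := by
  classical
  have hδ : 1 ≤ δ := by rcases h with h | h <;> omega
  set n := 2 * δ with hn
  set m := 2 * δ * δ + 1 with hm
  -- index set
  set D : Finset ((_ : ℕ) × ℕ) := (Finset.range (n + 1)).sigma
    (fun i => Finset.range (n + 1 - i)) with hD
  have hDmem : ∀ d ∈ D, d.1 + d.2 ≤ n := by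
    intro d hd
    rw [hD, Finset.mem_sigma] at hd
    have h1 := Finset.mem_range.mp hd.1
    have h2 := Finset.mem_range.mp hd.2
    omega
  have hDcard : 2 * δ * δ + 2 ≤ D.card := by
    rw [hD, Finset.card_sigma]
    simp only [Finset.card_range]
    have hrefl : ∑ i ∈ Finset.range (n + 1), (n + 1 - i)
        = ∑ i ∈ Finset.range (n + 1), (i + 1) := by
      rw [← Finset.sum_range_reflect (fun j => j + 1) (n + 1)]
      refine Finset.sum_congr rfl fun i hi => ?_
      have := Finset.mem_range.mp hi
      omega
    rw [hrefl, Finset.sum_add_distrib, Finset.sum_const, Finset.card_range, smul_eq_mul,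
      mul_one]
    have hg : (∑ x ∈ Finset.range (n + 1), x) * 2 = (n + 1) * n := by
      simpa using Finset.sum_range_id_mul_two (n + 1)
    simp only [hn] at hg ⊢
    nlinarith [hg, hδ]
  -- the evaluation vectors
  set v : ((_ : ℕ) × ℕ) → Polynomial ℝ := fun d => p ^ d.1 * q ^ d.2 with hv
  set W : Submodule ℝ (Polynomial ℝ) := Polynomial.degreeLT ℝ m with hW
  have hvW : ∀ d ∈ D, v d ∈ W := by
    intro d hd
    rw [hW, Polynomial.mem_degreeLT]
    have hnd : (v d).natDegree ≤ 2 * δ * δ := by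
      calc (v d).natDegree ≤ (p ^ d.1).natDegree + (q ^ d.2).natDegree :=
            Polynomial.natDegree_mul_le
        _ ≤ d.1 * p.natDegree + d.2 * q.natDegree :=
            add_le_add (Polynomial.natDegree_pow_le) (Polynomial.natDegree_pow_le)
        _ ≤ d.1 * δ + d.2 * δ := add_le_add (Nat.mul_le_mul_left _ hp) (Nat.mul_le_mul_left _ hq)
        _ = (d.1 + d.2) * δ := by ring
        _ ≤ n * δ := Nat.mul_le_mul_right _ (hDmem d hd)
        _ = 2 * δ * δ := by rw [hn]
    calc (v d).degree ≤ ((2 * δ * δ : ℕ) : WithBot ℕ) :=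
          Polynomial.natDegree_le_iff_degree_le.mp hnd
      _ < ((m : ℕ) : WithBot ℕ) := by exact_mod_cast Nat.lt_succ_self _
  -- the linear map
  set L0 : ((d : ↥D) → ℝ) →ₗ[ℝ] Polynomial ℝ :=
    { toFun := fun c => ∑ d : ↥D, c d • v d.1
      map_add' := by intro a b; simp [add_smul, Finset.sum_add_distrib]
      map_smul' := by intro r a; simp [Finset.smul_sum, smul_smul] } with hL0
  have hL0W : ∀ c, L0 c ∈ W := fun c =>
    Submodule.sum_mem _ fun d _ => Submodule.smul_mem _ _ (hvW d.1 d.2)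
  set L : ((d : ↥D) → ℝ) →ₗ[ℝ] W := L0.codRestrict W hL0W with hL
  have hWfin : FiniteDimensional ℝ W :=
    LinearEquiv.finiteDimensional (Polynomial.degreeLTEquiv ℝ m).symm
  have hWrank : Module.finrank ℝ W = m := by
    rw [(Polynomial.degreeLTEquiv ℝ m).finrank_eq, Module.finrank_fintype_fun_eq_card,
      Fintype.card_fin]
  have hnotinj : ¬ Function.Injective L := by
    intro hinj
    have hle := LinearMap.finrank_le_finrank_of_injective hinj
    rw [hWrank, Module.finrank_fintype_fun_eq_card, Fintype.card_coe] at hle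
    omega
  obtain ⟨c₁, c₂, hceq, hcne⟩ := Function.not_injective_iff.mp hnotinj
  set c : (d : ↥D) → ℝ := c₁ - c₂ with hc
  have hc0 : c ≠ 0 := sub_ne_zero.mpr hcne
  have hLc : L0 c = 0 := by
    have : L c = 0 := by rw [hc, map_sub, hceq, sub_self]
    have := congrArg (Subtype.val) this
    simpa [hL, LinearMap.codRestrict] using this
  -- the polynomial g
  set e : ((_ : ℕ) × ℕ) → (Fin 2 →₀ ℕ) :=
    fun d => Finsupp.single 0 d.1 + Finsupp.single 1 d.2 with he
  set w : ((_ : ℕ) × ℕ) → MvPolynomial (Fin 2) ℝ :=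
    fun d => MvPolynomial.X 0 ^ d.1 * MvPolynomial.X 1 ^ d.2 with hw
  have hwmono : ∀ d, w d = MvPolynomial.monomial (e d) 1 := by
    intro d
    rw [hw, he]
    simp [MvPolynomial.X_pow_eq_monomial, MvPolynomial.monomial_mul]
  set g : MvPolynomial (Fin 2) ℝ := ∑ d : ↥D, c d • w d.1 with hg
  have heinj : ∀ d₁ d₂ : ((_ : ℕ) × ℕ), e d₁ = e d₂ → d₁ = d₂ := by
    intro d₁ d₂ hee
    have h0 := congrArg (fun f => f 0) hee
    have h1 := congrArg (fun f => f 1) hee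
    simp [he, Finsupp.single_apply] at h0 h1
    exact Sigma.ext h0 (heq_of_eq h1)
  have hgne : g ≠ 0 := by
    obtain ⟨d₀, hd₀⟩ := Function.ne_iff.mp hc0
    intro hg0
    apply hd₀
    have : MvPolynomial.coeff (e d₀.1) g = c d₀ := by
      rw [hg, MvPolynomial.coeff_sum]
      rw [Finset.sum_eq_single d₀]
      · rw [hwmono, MvPolynomial.coeff_smul, MvPolynomial.coeff_monomial, if_pos rfl]
        simp
      · intro b _ hb
        rw [hwmono, MvPolynomial.coeff_smul, MvPolynomial.coeff_monomial, if_neg, smul_zero]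
        intro hee
        exact hb (Subtype.ext (heinj _ _ hee))
      · intro hd; exact absurd (Finset.mem_univ d₀) hd
    rw [hg0] at this
    simpa using this.symm
  have hgdeg : g.totalDegree ≤ 2 * δ := by
    rw [hg]
    refine (MvPolynomial.totalDegree_finset_sum _ _).trans (Finset.sup_le fun d _ => ?_)
    refine (MvPolynomial.totalDegree_smul_le _ _).trans ?_
    simp only [hw]
    refine le_trans (MvPolynomial.totalDegree_mul _ _) ?_
    rw [MvPolynomial.totalDegree_X_pow, MvPolynomial.totalDegree_X_pow]
    exact hDmem d.1 d.2
  set Φ : MvPolynomial (Fin 2) ℝ →ₐ[ℝ] Polynomial ℝ := MvPolynomial.aeval ![p, q] with hΦ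
  have hΦw : ∀ d, Φ (w d) = v d := by
    intro d
    rw [hΦ, hw, hv]
    simp [map_mul, map_pow]
  have hΦg : Φ g = 0 := by
    rw [hg, map_sum]
    simp_rw [map_smul, hΦw]
    exact hLc
  -- extract irreducible factor
  obtain ⟨u, hu⟩ := (UniqueFactorizationMonoid.factors_prod hgne)
  have hprod : Φ ((UniqueFactorizationMonoid.factors g).prod) = 0 := by
    have hun : IsUnit (Φ u.val) := u.isUnit.map Φ
    have : Φ ((UniqueFactorizationMonoid.factors g).prod) * Φ u.val = 0 := by
      rw [← map_mul, hu, hΦg]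
    rcases mul_eq_zero.mp this with h' | h'
    · exact h'
    · exact absurd h' hun.ne_zero
  rw [map_multiset_prod] at hprod
  obtain ⟨a, ha, ha0⟩ := Multiset.mem_map.mp (Multiset.prod_eq_zero_iff.mp hprod)
  refine ⟨a, UniqueFactorizationMonoid.irreducible_of_factor a ha, ?_, ?_⟩
  · exact (totalDegree_le_of_dvd hgne
      (UniqueFactorizationMonoid.dvd_of_mem_factors ha)).trans hgdeg
  · intro t
    have h1 : (Polynomial.evalRingHom t).comp (algebraMap ℝ (Polynomial ℝ))
        = RingHom.id ℝ := by
      ext r; simp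
    have h2 : (Polynomial.evalRingHom t) ∘ ![p, q] = ![p.eval t, q.eval t] := by
      funext i; fin_cases i <;> simp
    have h3 := MvPolynomial.eval₂_comp_left (Polynomial.evalRingHom t)
      (algebraMap ℝ (Polynomial ℝ)) ![p, q] a
    rw [h1, h2] at h3
    have hcomp : Polynomial.eval t (Φ a) = MvPolynomial.eval ![p.eval t, q.eval t] a := by
      exact h3
    rw [← hcomp, ha0, Polynomial.eval_zero]
end
end

section
/- Let p_1, p_2, q_1, q_2 ∈ ℝ[x] be nonconstant polynomials, each of degree at most δ, all having zero constant term. Assume p_1 ≢_a q_1. Then there exists a constant c > 0 depending only on δ such that for all n ∈ ℕ and all finite sets A, B ⊂ ℝ with |A| = |B| = n, |p_1(A) + p_2(B)| · |q_1(A) + q_2(B)| ≥ c · n^{5/2}. -/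
/-!
The derivatives `p₁'`, `q₁'` and their Wronskian `p₁' q₁'' - p₁'' q₁'` are nonzero (the Wronskian
because `p₁ ≢_a q₁` and both vanish at `0`), so they have at most `4δ` real roots between them, and
one gap between consecutive roots contains `k + 1 ≳ n / δ` points `a₀ < ⋯ < a_k` of `A`. On that
gap `p₁`, `q₁` and `q₁' / p₁'` are strictly monotone, so by Cauchy's mean value theorem the steps
`(p₁ aᵢ₊₁ - p₁ aᵢ, q₁ aᵢ₊₁ - q₁ aᵢ)` are pairwise distinct.

Squeezing: put `xᵢ = p₁ aᵢ`, `yᵢ = q₁ aᵢ`, `B' = p₂(B)`, `C' = q₂(B)`, so that `xᵢ + B' ⊆ S`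
and `yᵢ + C' ⊆ T`. For each `b` the intervals `(xᵢ + b, xᵢ₊₁ + b]` are disjoint, so fewer than
`k / 4` of them contain more than `4|S|/k` points of `S`; likewise for `T`. Hence at least
`k |B'| |C'| / 2` triples `(b, c, i)` have both intervals short, and such a triple is determined
by the left endpoints `xᵢ + b`, `yᵢ + c` and the two point counts: the counts give the right
endpoints, hence the step, hence `i`. So `k |B'| |C'| / 2 ≤ |S| (4|S|/k + 1) |T| (4|T|/k + 1)`,
i.e. `k³ |B'| |C'| ≤ 50 (|S| |T|)²`, and `|B'|, |C'| ≥ n / δ` turns this into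
`n⁵ ≲ δ⁵ (|S| |T|)²`.
-/

open Polynomial Pointwise

noncomputable section

/-- `p ≡_a q` : there is a nonzero real `λ` with `p(x) = λ q(x)` for all real `x`. -/
def EquivA (p q : Polynomial ℝ) : Prop :=
  ∃ l : ℝ, l ≠ 0 ∧ ∀ x : ℝ, p.eval x = l * q.eval x

open Finset

def cardIoc (S : Finset ℝ) (u v : ℝ) : ℕ := #{w ∈ S | u < w ∧ w ≤ v}

lemma cardIoc_strictMonoOn (S : Finset ℝ) (u : ℝ) :
    StrictMonoOn (cardIoc S u) {v | v ∈ S ∧ u < v} := by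
  intro v _ v' ⟨hv'S, huv'⟩ hvv'
  refine card_lt_card ⟨fun w hw => ?_, fun h => ?_⟩
  · simp only [mem_filter] at hw ⊢
    exact ⟨hw.1, hw.2.1, hw.2.2.trans hvv'.le⟩
  · have := (mem_filter.1 (h (mem_filter.2 ⟨hv'S, huv', le_rfl⟩))).2.2
    linarith

lemma card_filter_lt_mul_le_sum {ι : Type*} (s : Finset ι) (f : ι → ℕ) (R : ℕ) :
    #{i ∈ s | R < f i} * (R + 1) ≤ ∑ i ∈ s, f i :=
  calc #{i ∈ s | R < f i} * (R + 1) = ∑ i ∈ s with R < f i, (R + 1) := by simp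
    _ ≤ ∑ i ∈ s with R < f i, f i := sum_le_sum fun i hi => (mem_filter.1 hi).2
    _ ≤ ∑ i ∈ s, f i := sum_le_sum_of_subset (filter_subset _ _)

lemma le_two_mul_card_filter_and {ι : Type*} [Fintype ι] {P Q : ι → Prop} [DecidablePred P]
    [DecidablePred Q] (hP : 4 * #{i | ¬P i} < Fintype.card ι)
    (hQ : 4 * #{i | ¬Q i} < Fintype.card ι) :
    Fintype.card ι ≤ 2 * #{i | P i ∧ Q i} := by
  classical
  have hsplit := card_filter_add_card_filter_not (s := univ) fun i => P i ∧ Q i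
  have hbad : #{i | ¬(P i ∧ Q i)} ≤ #{i | ¬P i} + #{i | ¬Q i} := by
    refine (card_le_card fun i hi => ?_).trans (card_union_le _ _)
    simp only [mem_filter, mem_univ, true_and, mem_union] at hi ⊢
    tauto
  rw [card_univ] at hsplit
  omega

lemma mul_div_add_one_le {k s : ℕ} (hks : k ≤ s) : k * (4 * s / k + 1) ≤ 5 * s := by
  have : k * (4 * s / k) ≤ 4 * s := Nat.mul_div_le _ _
  rw [mul_add_one]
  omega

def stepCount {k : ℕ} (S : Finset ℝ) (x : Fin (k + 1) → ℝ) (b : ℝ) (i : Fin k) : ℕ :=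
  cardIoc S (x i.castSucc + b) (x i.succ + b)

section Steps

variable {k : ℕ} (S : Finset ℝ) {x : Fin (k + 1) → ℝ}

lemma sum_stepCount_le (hx : Monotone x) (b : ℝ) : ∑ i, stepCount S x b i ≤ #S := by
  unfold stepCount cardIoc
  rw [← card_biUnion]
  · exact card_le_card (biUnion_subset.2 fun _ _ => filter_subset _ _)
  refine Pairwise.set_pairwise ((pairwise_disjoint_on _).2 fun i j hij => ?_) _
  refine disjoint_filter.2 fun w _ hi hj => ?_
  have := hx (Fin.succ_le_castSucc_iff.2 hij)
  linarith [hi.2, hj.1]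

lemma four_mul_card_filter_lt_stepCount (hk : 0 < k) (hx : Monotone x) (b : ℝ) :
    4 * #{i | 4 * #S / k < stepCount S x b i} < k := by
  have hsum := sum_stepCount_le S hx b
  have hmarkov := card_filter_lt_mul_le_sum univ (stepCount S x b) (4 * #S / k)
  have hR := Nat.lt_mul_div_succ (4 * #S) hk
  refine Nat.lt_of_mul_lt_mul_right (a := 4 * #S / k + 1) ?_
  linarith

lemma step_eq_of_stepCount_eq (hx : StrictMono x) {i j : Fin k} {b b' : ℝ}
    (hi : x i.succ + b ∈ S) (hj : x j.succ + b' ∈ S)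
    (hstart : x i.castSucc + b = x j.castSucc + b')
    (hcount : stepCount S x b i = stepCount S x b' j) :
    x i.succ - x i.castSucc = x j.succ - x j.castSucc := by
  unfold stepCount at hcount
  rw [hstart] at hcount
  have hi' := hx i.castSucc_lt_succ
  have hj' := hx j.castSucc_lt_succ
  have := (cardIoc_strictMonoOn S _).injOn ⟨hi, by linarith⟩ ⟨hj, by linarith⟩ hcount
  linarith

lemma add_one_le_card_of_forall_add_mem (hx : Function.Injective x) {B : Finset ℝ}
    (hB : B.Nonempty) (hS : ∀ i, ∀ b ∈ B, x i + b ∈ S) : k + 1 ≤ #S := by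
  obtain ⟨b, hb⟩ := hB
  simpa using card_le_card_of_injOn (s := univ) (fun i => x i + b) (fun i _ => hS i b hb)
    fun i _ j _ h => hx (add_right_cancel h)

end Steps

def shortTriples {k : ℕ} (x y : Fin (k + 1) → ℝ) (B C S T : Finset ℝ) (R R' : ℕ) :
    Finset ((_ : ℝ × ℝ) × Fin k) :=
  (B ×ˢ C).sigma fun bc => {i | stepCount S x bc.1 i ≤ R ∧ stepCount T y bc.2 i ≤ R'}

section Squeezing

variable {k : ℕ} {x y : Fin (k + 1) → ℝ} {B C S T : Finset ℝ}

/-- A short triple `(b, c, i)` is recovered from `xᵢ + b`, `yᵢ + c` and its two step counts. -/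
lemma card_shortTriples_le (hx : StrictMono x) (hy : StrictMono y)
    (hxy : Function.Injective fun i : Fin k => (x i.succ - x i.castSucc, y i.succ - y i.castSucc))
    (hS : ∀ i, ∀ b ∈ B, x i + b ∈ S) (hT : ∀ i, ∀ c ∈ C, y i + c ∈ T) (R R' : ℕ) :
    #(shortTriples x y B C S T R R') ≤ #S * (R + 1) * (#T * (R' + 1)) := by
  rw [← card_range (R + 1), ← card_range (R' + 1), ← card_product, ← card_product,
    ← card_product]
  refine card_le_card_of_injOn (fun t => ((x t.2.castSucc + t.1.1, stepCount S x t.1.1 t.2),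
    (y t.2.castSucc + t.1.2, stepCount T y t.1.2 t.2))) ?_ ?_
  · rintro ⟨⟨b, c⟩, i⟩ ht
    simp only [shortTriples, coe_sigma, Set.mem_sigma_iff, coe_product, Set.mem_prod, mem_coe,
      mem_filter, mem_univ, true_and] at ht
    simp only [mem_coe, mem_product, mem_range]
    exact ⟨⟨hS _ b ht.1.1, Nat.lt_succ_of_le ht.2.1⟩, hT _ c ht.1.2, Nat.lt_succ_of_le ht.2.2⟩
  · rintro ⟨⟨b, c⟩, i⟩ ht ⟨⟨b', c'⟩, j⟩ ht' h
    simp only [shortTriples, coe_sigma, Set.mem_sigma_iff, coe_product, Set.mem_prod, mem_coe,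
      mem_filter, mem_univ, true_and] at ht ht'
    simp only [Prod.mk.injEq] at h
    obtain ⟨⟨hx₀, hr⟩, hy₀, hr'⟩ := h
    obtain rfl : i = j := hxy (Prod.ext
      (step_eq_of_stepCount_eq S hx (hS _ b ht.1.1) (hS _ b' ht'.1.1) hx₀ hr)
      (step_eq_of_stepCount_eq T hy (hT _ c ht.1.2) (hT _ c' ht'.1.2) hy₀ hr'))
    obtain rfl : b = b' := add_left_cancel hx₀
    obtain rfl : c = c' := add_left_cancel hy₀
    rfl

theorem cube_mul_card_mul_card_le_of_strictMono (hx : StrictMono x) (hy : StrictMono y)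
    (hxy : Function.Injective fun i : Fin k => (x i.succ - x i.castSucc, y i.succ - y i.castSucc))
    (hS : ∀ i, ∀ b ∈ B, x i + b ∈ S) (hT : ∀ i, ∀ c ∈ C, y i + c ∈ T) :
    k ^ 3 * #B * #C ≤ 50 * (#S * #T) ^ 2 := by
  rcases Nat.eq_zero_or_pos k with rfl | hk
  · simp
  obtain rfl | hB := B.eq_empty_or_nonempty
  · simp
  obtain rfl | hC := C.eq_empty_or_nonempty
  · simp
  set R := 4 * #S / k
  set R' := 4 * #T / k
  have hlower : k * (#B * #C) ≤ 2 * #(shortTriples x y B C S T R R') := by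
    rw [shortTriples, card_sigma, mul_sum, ← card_product, card_eq_sum_ones, mul_sum, mul_one]
    refine sum_le_sum fun bc _ => ?_
    simpa using le_two_mul_card_filter_and (P := fun i => stepCount S x bc.1 i ≤ R)
      (Q := fun i => stepCount T y bc.2 i ≤ R')
      (by simpa only [not_le, Fintype.card_fin] using
        four_mul_card_filter_lt_stepCount S hk hx.monotone bc.1)
      (by simpa only [not_le, Fintype.card_fin] using
        four_mul_card_filter_lt_stepCount T hk hy.monotone bc.2)
  have hupper := card_shortTriples_le hx hy hxy hS hT R R'
  have hkS : k * (R + 1) ≤ 5 * #S :=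
    mul_div_add_one_le (Nat.le_of_succ_le (add_one_le_card_of_forall_add_mem S hx.injective hB hS))
  have hkT : k * (R' + 1) ≤ 5 * #T :=
    mul_div_add_one_le (Nat.le_of_succ_le (add_one_le_card_of_forall_add_mem T hy.injective hC hT))
  calc k ^ 3 * #B * #C = k ^ 2 * (k * (#B * #C)) := by ring
    _ ≤ k ^ 2 * (2 * (#S * (R + 1) * (#T * (R' + 1)))) :=
      Nat.mul_le_mul_left _ (hlower.trans (Nat.mul_le_mul_left 2 hupper))
    _ = 2 * (k * (R + 1)) * (k * (R' + 1)) * (#S * #T) := by ring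
    _ ≤ 2 * (5 * #S) * (5 * #T) * (#S * #T) := by gcongr
    _ = 50 * (#S * #T) ^ 2 := by ring

lemma forall_add_mem_neg {ι : Type*} {x : ι → ℝ} (hS : ∀ i, ∀ b ∈ B, x i + b ∈ S) :
    ∀ i, ∀ b ∈ -B, -x i + b ∈ -S := by
  intro i b hb
  rw [mem_neg']
  convert hS i _ (mem_neg'.1 hb) using 1
  ring

theorem cube_mul_card_mul_card_le (hx : StrictMono x ∨ StrictAnti x)
    (hy : StrictMono y ∨ StrictAnti y)
    (hxy : Function.Injective fun i : Fin k => (x i.succ - x i.castSucc, y i.succ - y i.castSucc))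
    (hS : ∀ i, ∀ b ∈ B, x i + b ∈ S) (hT : ∀ i, ∀ c ∈ C, y i + c ∈ T) :
    k ^ 3 * #B * #C ≤ 50 * (#S * #T) ^ 2 := by
  wlog hy' : StrictMono y generalizing y C T
  · have hy' := (hy.resolve_left hy').neg
    simpa only [card_neg] using this (hy := .inl hy') (hT := forall_add_mem_neg hT) (hy' := hy')
      (hxy := fun i j h => hxy (by
        simp only [Prod.mk.injEq] at h ⊢; constructor <;> linarith [h.1, h.2]))
  wlog hx' : StrictMono x generalizing x B S
  · have hx' := (hx.resolve_left hx').neg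
    simpa only [card_neg] using this (hx := .inl hx') (hS := forall_add_mem_neg hS) (hx' := hx')
      (hxy := fun i j h => hxy (by
        simp only [Prod.mk.injEq] at h ⊢; constructor <;> linarith [h.1, h.2]))
  exact cube_mul_card_mul_card_le_of_strictMono hx' hy' hxy hS hT

end Squeezing

section Analysis

open Set

variable {s : Set ℝ}

lemma strictMonoOn_or_strictAntiOn_of_hasDerivAt_ne_zero {f f' : ℝ → ℝ} (hs : Convex ℝ s)
    (hf : ∀ x ∈ s, HasDerivAt f (f' x) x) (hf' : ∀ x ∈ s, f' x ≠ 0) :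
    StrictMonoOn f s ∨ StrictAntiOn f s := by
  have hcont : ContinuousOn f s := fun x hx => (hf x hx).continuousAt.continuousWithinAt
  have hint : ∀ x ∈ interior s, HasDerivWithinAt f (f' x) (interior s) x :=
    fun x hx => (hf x (interior_subset hx)).hasDerivWithinAt
  rcases hasDerivWithinAt_forall_lt_or_forall_gt_of_forall_ne hs
    (fun x hx => (hf x hx).hasDerivWithinAt) hf' with h | h
  · exact .inr <| strictAntiOn_of_hasDerivWithinAt_neg hs hcont hint
      fun x hx => h x (interior_subset hx)
  · exact .inl <| strictMonoOn_of_hasDerivWithinAt_pos hs hcont hint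
      fun x hx => h x (interior_subset hx)

namespace Polynomial

lemma strictMonoOn_or_strictAntiOn_eval (p : ℝ[X]) (hs : Convex ℝ s)
    (hp : ∀ x ∈ s, (derivative p).eval x ≠ 0) :
    StrictMonoOn p.eval s ∨ StrictAntiOn p.eval s :=
  strictMonoOn_or_strictAntiOn_of_hasDerivAt_ne_zero hs (fun x _ => p.hasDerivAt x) hp

lemma injOn_eval_div_eval (p q : ℝ[X]) (hs : Convex ℝ s) (hp : ∀ x ∈ s, p.eval x ≠ 0)
    (hpq : ∀ x ∈ s, (wronskian p q).eval x ≠ 0) :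
    InjOn (fun x => q.eval x / p.eval x) s := by
  refine (strictMonoOn_or_strictAntiOn_of_hasDerivAt_ne_zero hs
    (fun x hx => (q.hasDerivAt x).div (p.hasDerivAt x) (hp x hx)) fun x hx => ?_).elim
    StrictMonoOn.injOn StrictAntiOn.injOn
  have := hpq x hx
  simp only [wronskian, eval_sub, eval_mul] at this
  exact div_ne_zero (by contrapose! this; linarith) (pow_ne_zero 2 (hp x hx))

/-- By Cauchy's mean value theorem both step ratios `Δq / Δp` are values of the injective
function `q' / p'` at points of the two disjoint intervals. -/
lemma sub_ne_sub_of_wronskian_ne_zero (p q : ℝ[X]) (hs : Convex ℝ s)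
    (hp : ∀ x ∈ s, (derivative p).eval x ≠ 0)
    (hpq : ∀ x ∈ s, (wronskian (derivative p) (derivative q)).eval x ≠ 0)
    {a b c d : ℝ} (ha : a ∈ s) (hd : d ∈ s) (hab : a < b) (hbc : b ≤ c) (hcd : c < d)
    (h : p.eval b - p.eval a = p.eval d - p.eval c) :
    q.eval b - q.eval a ≠ q.eval d - q.eval c := by
  intro h'
  have hmem : Icc a d ⊆ s := hs.ordConnected.out ha hd
  obtain ⟨ξ, hξ, hξeq⟩ := exists_ratio_hasDerivAt_eq_ratio_slope p.eval (derivative p).eval hab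
    p.continuousOn (fun x _ => p.hasDerivAt x) q.eval (derivative q).eval q.continuousOn
    (fun x _ => q.hasDerivAt x)
  obtain ⟨η, hη, hηeq⟩ := exists_ratio_hasDerivAt_eq_ratio_slope p.eval (derivative p).eval hcd
    p.continuousOn (fun x _ => p.hasDerivAt x) q.eval (derivative q).eval q.continuousOn
    (fun x _ => q.hasDerivAt x)
  have hξs : ξ ∈ s := hmem ⟨by linarith [hξ.1], by linarith [hξ.2]⟩
  have hηs : η ∈ s := hmem ⟨by linarith [hη.1], by linarith [hη.2]⟩
  have hΔ : p.eval b - p.eval a ≠ 0 := by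
    rcases p.strictMonoOn_or_strictAntiOn_eval hs hp with hm | hm
    · linarith [hm (hmem ⟨le_rfl, by linarith⟩) (hmem ⟨by linarith, by linarith⟩) hab]
    · linarith [hm (hmem ⟨le_rfl, by linarith⟩) (hmem ⟨by linarith, by linarith⟩) hab]
  have := injOn_eval_div_eval _ _ hs hp hpq hξs hηs (by
    simp only
    rw [div_eq_div_iff (hp ξ hξs) (hp η hηs)]
    rw [← h, ← h'] at hηeq
    apply mul_left_cancel₀ hΔ
    linear_combination (-(derivative p).eval η) * hξeq + (derivative p).eval ξ * hηeq)
  linarith [hξ.2, hη.1]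

theorem cube_mul_card_mul_card_le_of_convex (p q : ℝ[X]) (hs : Convex ℝ s)
    (hp : ∀ x ∈ s, (derivative p).eval x ≠ 0) (hq : ∀ x ∈ s, (derivative q).eval x ≠ 0)
    (hpq : ∀ x ∈ s, (wronskian (derivative p) (derivative q)).eval x ≠ 0)
    {F B C S T : Finset ℝ} (hFs : ↑F ⊆ s) (hS : F.image p.eval + B ⊆ S)
    (hT : F.image q.eval + C ⊆ T) :
    (#F - 1) ^ 3 * #B * #C ≤ 50 * (#S * #T) ^ 2 := by
  obtain hF | ⟨k, hF⟩ : #F = 0 ∨ ∃ k, #F = k + 1 := by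
    rcases #F with _ | k
    exacts [.inl rfl, .inr ⟨k, rfl⟩]
  · simp [hF]
  rw [hF, Nat.add_sub_cancel]
  set a := F.orderEmbOfFin hF
  have ha : ∀ i, a i ∈ s := fun i => hFs (F.orderEmbOfFin_mem hF i)
  have hmono (r : ℝ[X]) (hr : ∀ x ∈ s, (derivative r).eval x ≠ 0) :
      StrictMono (r.eval ∘ a) ∨ StrictAnti (r.eval ∘ a) :=
    (r.strictMonoOn_or_strictAntiOn_eval hs hr).imp
      (fun h _ _ hij => h (ha _) (ha _) (a.strictMono hij))
      (fun h _ _ hij => h (ha _) (ha _) (a.strictMono hij))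
  have hsteps {i j : Fin k} (hij : i < j) (h : p.eval (a i.succ) - p.eval (a i.castSucc) =
      p.eval (a j.succ) - p.eval (a j.castSucc)) :
      q.eval (a i.succ) - q.eval (a i.castSucc) ≠ q.eval (a j.succ) - q.eval (a j.castSucc) :=
    sub_ne_sub_of_wronskian_ne_zero p q hs hp hpq (ha _) (ha _)
      (a.strictMono i.castSucc_lt_succ) (a.monotone (Fin.succ_le_castSucc_iff.2 hij))
      (a.strictMono j.castSucc_lt_succ) h
  refine cube_mul_card_mul_card_le (hmono p hp) (hmono q hq) (fun i j h => ?_)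
    (fun i b hb => hS (add_mem_add (mem_image_of_mem _ (F.orderEmbOfFin_mem hF i)) hb))
    (fun i c hc => hT (add_mem_add (mem_image_of_mem _ (F.orderEmbOfFin_mem hF i)) hc))
  simp only [Prod.mk.injEq, Function.comp_apply] at h
  by_contra hij
  rcases lt_or_gt_of_ne hij with hij | hij
  · exact hsteps hij h.1 h.2
  · exact hsteps hij h.1.symm h.2.symm

end Polynomial

end Analysis

lemma exists_ordConnected_disjoint (A Z : Finset ℝ) :
    ∃ I : Set ℝ, I.OrdConnected ∧ Disjoint I Z ∧
      ∃ F ⊆ A, ↑F ⊆ I ∧ #A ≤ (#Z + 1) * (#F + 1) := by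
  set φ : ℝ → ℕ := fun t => #{z ∈ Z | z < t}
  have hφ : Monotone φ := fun t t' h => card_le_card fun z hz => by
    simp only [mem_filter] at hz ⊢
    exact ⟨hz.1, hz.2.trans_le h⟩
  obtain ⟨j, -, hj⟩ := exists_max_image (range (#Z + 1)) (fun j => #{a ∈ A \ Z | φ a = j})
    nonempty_range_add_one
  refine ⟨{t | t ∉ Z ∧ φ t = j}, ⟨?_⟩, Set.disjoint_left.2 fun t ht => ht.1,
    {a ∈ A \ Z | φ a = j}, filter_subset _ _ |>.trans sdiff_subset, fun a ha => ?_, ?_⟩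
  · rintro t₁ ⟨-, ht₁⟩ t₂ ⟨ht₂Z, ht₂⟩ t ⟨h₁, h₂⟩
    have hφt : φ t = j := le_antisymm (ht₂ ▸ hφ h₂) (ht₁ ▸ hφ h₁)
    refine ⟨fun htZ => ?_, hφt⟩
    -- a point of `Z` in `[t, t₂)` would make `φ t₂ > φ t`
    have hlt : t < t₂ := lt_of_le_of_ne h₂ (by rintro rfl; exact ht₂Z htZ)
    have : φ t < φ t₂ := by
      refine card_lt_card ⟨fun z hz => ?_, fun h => ?_⟩
      · simp only [mem_filter] at hz ⊢
        exact ⟨hz.1, hz.2.trans hlt⟩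
      · exact lt_irrefl t (mem_filter.1 (h (mem_filter.2 ⟨htZ, hlt⟩))).2
    omega
  · simp only [coe_filter, mem_sdiff, Set.mem_ofPred_eq] at ha
    exact ⟨ha.1.2, ha.2⟩
  · have hfib := card_le_mul_card_image_of_maps_to (s := A \ Z) (t := range (#Z + 1)) (f := φ)
      (fun a _ => mem_range.2 (Nat.lt_succ_of_le (card_filter_le _ _))) _ hj
    have := card_le_card_sdiff_add_card (s := A) (t := Z)
    rw [card_range] at hfib
    nlinarith

namespace Polynomial

lemma exists_eq_C_mul_of_wronskian_eq_zero {K : Type*} [Field K] [CharZero K] [DecidableEq K]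
    {a b : K[X]} (ha : a ≠ 0) (h : wronskian a b = 0) : ∃ c, b = C c * a := by
  have hgcd : gcd a b ≠ 0 := gcd_ne_zero_of_left ha
  obtain ⟨g, a₁, b₁, hg, hcop, rfl, rfl⟩ :
      ∃ g a₁ b₁, g ≠ 0 ∧ IsCoprime a₁ b₁ ∧ a = g * a₁ ∧ b = g * b₁ :=
    ⟨_, _, _, hgcd, isCoprime_div_gcd_div_gcd_of_gcd_ne_zero hgcd,
      (EuclideanDomain.mul_div_cancel' hgcd (gcd_dvd_left a b)).symm,
      (EuclideanDomain.mul_div_cancel' hgcd (gcd_dvd_right a b)).symm⟩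
  have hw : g ^ 2 * wronskian a₁ b₁ = 0 := by
    rw [← h]
    simp only [wronskian, derivative_mul]
    ring
  obtain ⟨ha₁, hb₁⟩ :=
    hcop.wronskian_eq_zero_iff.1 ((mul_eq_zero.1 hw).resolve_left (pow_ne_zero 2 hg))
  rw [eq_C_of_derivative_eq_zero ha₁] at ha ⊢
  rw [eq_C_of_derivative_eq_zero hb₁]
  have hα : a₁.coeff 0 ≠ 0 := fun hα => ha (by rw [hα, C_0, mul_zero])
  refine ⟨b₁.coeff 0 / a₁.coeff 0, ?_⟩
  rw [mul_left_comm, ← C_mul, div_mul_cancel₀ _ hα]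

lemma wronskian_derivative_ne_zero {p q : ℝ[X]} (hp : 0 < p.natDegree) (hq : 0 < q.natDegree)
    (hp₀ : p.eval 0 = 0) (hq₀ : q.eval 0 = 0) (hpq : ¬ EquivA p q) :
    wronskian (derivative p) (derivative q) ≠ 0 := by
  intro h
  obtain ⟨c, hc⟩ := exists_eq_C_mul_of_wronskian_eq_zero (mt derivative_eq_zero.1 hq.ne')
    (by rw [← wronskian_neg_eq, h, neg_zero])
  have hpc : p = C c * q := by
    have hd : derivative (p - C c * q) = 0 := by
      rw [derivative_sub, derivative_C_mul, hc, sub_self]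
    have := eq_C_of_derivative_eq_zero hd
    rw [coeff_zero_eq_eval_zero, eval_sub, eval_mul, eval_C, hp₀, hq₀, mul_zero, sub_zero,
      C_0] at this
    exact sub_eq_zero.1 this
  have hc₀ : c ≠ 0 := by
    rintro rfl
    simp [hpc] at hp
  exact hpq ⟨c, hc₀, fun x => by rw [hpc, eval_mul, eval_C]⟩

lemma exists_convex_eval_ne_zero {P : ℝ[X]} (hP : P ≠ 0) (A : Finset ℝ) :
    ∃ s : Set ℝ, Convex ℝ s ∧ (∀ x ∈ s, P.eval x ≠ 0) ∧
      ∃ F ⊆ A, ↑F ⊆ s ∧ #A ≤ (P.natDegree + 1) * (#F + 1) := by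
  obtain ⟨I, hI, hIZ, F, hFA, hFI, hAF⟩ := exists_ordConnected_disjoint A P.roots.toFinset
  refine ⟨I, hI.convex, fun x hx h => Set.disjoint_left.1 hIZ hx ?_, F, hFA, hFI,
    hAF.trans (Nat.mul_le_mul_right _ (Nat.succ_le_succ ?_))⟩
  · simpa [mem_roots hP] using h
  · exact (Multiset.toFinset_card_le _).trans (card_roots' P)

lemma exists_convex_derivative_ne_zero {p q : ℝ[X]} {δ : ℕ} (hp : 0 < p.natDegree)
    (hq : 0 < q.natDegree) (hpδ : p.natDegree ≤ δ) (hqδ : q.natDegree ≤ δ)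
    (hpq : wronskian (derivative p) (derivative q) ≠ 0) (A : Finset ℝ) :
    ∃ s : Set ℝ, Convex ℝ s ∧ (∀ x ∈ s, (derivative p).eval x ≠ 0) ∧
      (∀ x ∈ s, (derivative q).eval x ≠ 0) ∧
      (∀ x ∈ s, (wronskian (derivative p) (derivative q)).eval x ≠ 0) ∧
      ∃ F ⊆ A, ↑F ⊆ s ∧ #A ≤ (4 * δ + 1) * (#F + 1) := by
  have hP : derivative p * derivative q * wronskian (derivative p) (derivative q) ≠ 0 :=
    mul_ne_zero (mul_ne_zero (mt derivative_eq_zero.1 hp.ne') (mt derivative_eq_zero.1 hq.ne')) hpq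
  have hPδ : (derivative p * derivative q *
      wronskian (derivative p) (derivative q)).natDegree ≤ 4 * δ := by
    have := natDegree_wronskian_lt_add hpq
    have := natDegree_derivative_le p
    have := natDegree_derivative_le q
    have := natDegree_mul_le (p := derivative p * derivative q)
      (q := wronskian (derivative p) (derivative q))
    have := natDegree_mul_le (p := derivative p) (q := derivative q)
    omega
  obtain ⟨s, hs, hPs, F, hFA, hFs, hAF⟩ := exists_convex_eval_ne_zero hP A
  simp only [eval_mul, mul_ne_zero_iff] at hPs
  exact ⟨s, hs, fun x hx => (hPs x hx).1.1, fun x hx => (hPs x hx).1.2, fun x hx => (hPs x hx).2,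
    F, hFA, hFs, hAF.trans (Nat.mul_le_mul_right _ (by omega))⟩

lemma card_le_natDegree_mul_card_image {R : Type*} [CommRing R] [IsDomain R] [DecidableEq R]
    {p : R[X]} (hp : 0 < p.natDegree) (A : Finset R) :
    #A ≤ p.natDegree * #(A.image p.eval) := by
  refine card_le_mul_card_image A _ fun b _ => ?_
  have hpb : p - C b ≠ 0 := fun h => by
    rw [sub_eq_zero.1 h, natDegree_C] at hp
    exact hp.false
  rw [← natDegree_sub_C (a := b)]
  refine card_le_degree_of_subset_roots fun x hx => ?_
  rw [mem_roots hpb, IsRoot, eval_sub, eval_C, sub_eq_zero]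
  exact (mem_filter.1 hx).2

lemma card_le_mul_card_image_add {p : ℝ[X]} {δ : ℕ} (hp : 0 < p.natDegree)
    (hpδ : p.natDegree ≤ δ) (A : Finset ℝ) {X : Finset ℝ} (hX : X.Nonempty) :
    #A ≤ δ * #(A.image p.eval + X) :=
  (card_le_natDegree_mul_card_image hp A).trans
    (Nat.mul_le_mul hpδ (card_le_card_add_right hX))

end Polynomial

lemma pow_five_le_sq {n d f s t b c : ℕ} (hs : n ≤ d * s) (ht : n ≤ d * t) (hb : n ≤ d * b)
    (hc : n ≤ d * c) (hf : n ≤ (4 * d + 1) * (f + 1))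
    (hkey : (f - 1) ^ 3 * b * c ≤ 50 * (s * t) ^ 2) :
    n ^ 5 ≤ (500 * (d + 1) ^ 3 * (s * t)) ^ 2 := by
  obtain rfl | hd := Nat.eq_zero_or_pos d
  · simp_all
  suffices n ^ 5 ≤ 500 ^ 2 * d ^ 5 * (s * t) ^ 2 by
    calc n ^ 5 ≤ 500 ^ 2 * d ^ 5 * (s * t) ^ 2 := this
      _ ≤ 500 ^ 2 * (d + 1) ^ 6 * (s * t) ^ 2 := by
        refine Nat.mul_le_mul_right _ (Nat.mul_le_mul_left _ ?_)
        calc d ^ 5 ≤ (d + 1) ^ 5 := Nat.pow_le_pow_left d.le_succ 5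
          _ ≤ (d + 1) ^ 6 := Nat.pow_le_pow_right d.succ_pos (by norm_num)
      _ = _ := by ring
  have hst : n ^ 2 ≤ d ^ 2 * (s * t) := by nlinarith
  have hbc : n ^ 2 ≤ d ^ 2 * (b * c) := by nlinarith
  obtain hf | ⟨m, rfl⟩ : f ≤ 1 ∨ ∃ m, f = m + 2 := by
    rcases f with _ | _ | m
    exacts [.inl (by omega), .inl le_rfl, .inr ⟨m, rfl⟩]
  · have hn : n ≤ 10 * d := by nlinarith
    calc n ^ 5 = n * (n ^ 2) ^ 2 := by ring
      _ ≤ 10 * d * (d ^ 2 * (s * t)) ^ 2 := by gcongr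
      _ ≤ 500 ^ 2 * d ^ 5 * (s * t) ^ 2 := by ring_nf; gcongr; norm_num
  · rw [show m + 2 - 1 = m + 1 by omega] at hkey
    have hn : n ≤ 15 * d * (m + 1) := by nlinarith
    calc n ^ 5 = n ^ 3 * n ^ 2 := by ring
      _ ≤ (15 * d * (m + 1)) ^ 3 * (d ^ 2 * (b * c)) := by gcongr
      _ = 3375 * d ^ 5 * ((m + 1) ^ 3 * b * c) := by ring
      _ ≤ 3375 * d ^ 5 * (50 * (s * t) ^ 2) := by gcongr
      _ ≤ 500 ^ 2 * d ^ 5 * (s * t) ^ 2 := by ring_nf; gcongr; norm_num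

lemma one_div_mul_rpow_five_halves_le {x y K : ℝ} (hx : 0 ≤ x) (hy : 0 ≤ y) (hK : 0 < K)
    (h : x ^ 5 ≤ (K * y) ^ 2) : 1 / K * x ^ ((5 : ℝ) / 2) ≤ y := by
  rw [one_div_mul_eq_div, div_le_iff₀' hK,
    ← pow_le_pow_iff_left₀ (by positivity) (by positivity) two_ne_zero, ← Real.rpow_natCast,
    ← Real.rpow_mul hx]
  norm_num
  exact_mod_cast h

theorem stmt9 (δ : ℕ) :
    ∃ c : ℝ, 0 < c ∧
      ∀ p₁ p₂ q₁ q₂ : Polynomial ℝ,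
        0 < p₁.natDegree → 0 < p₂.natDegree → 0 < q₁.natDegree → 0 < q₂.natDegree →
        p₁.natDegree ≤ δ → p₂.natDegree ≤ δ → q₁.natDegree ≤ δ → q₂.natDegree ≤ δ →
        p₁.eval 0 = 0 → p₂.eval 0 = 0 → q₁.eval 0 = 0 → q₂.eval 0 = 0 →
        ¬ EquivA p₁ q₁ →
        ∀ (n : ℕ) (A B : Finset ℝ), A.card = n → B.card = n →
          c * (n : ℝ) ^ ((5 : ℝ) / 2) ≤
            (((A.image fun a => p₁.eval a) + (B.image fun b => p₂.eval b)).card : ℝ) *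
            (((A.image fun a => q₁.eval a) + (B.image fun b => q₂.eval b)).card : ℝ) := by
  refine ⟨1 / (500 * ((δ : ℝ) + 1) ^ 3), by positivity, ?_⟩
  intro p₁ p₂ q₁ q₂ hp₁ hp₂ hq₁ hq₂ hp₁δ hp₂δ hq₁δ hq₂δ hp₁₀ _ hq₁₀ _ hpq n A B hA hB
  subst hA
  obtain rfl | hA₀ := A.eq_empty_or_nonempty
  · simp
  have hB₀ : B.Nonempty := card_pos.1 (hB ▸ card_pos.2 hA₀)
  obtain ⟨s, hs, hp₁s, hq₁s, hWs, F, hFA, hFs, hAF⟩ := exists_convex_derivative_ne_zero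
    hp₁ hq₁ hp₁δ hq₁δ (wronskian_derivative_ne_zero hp₁ hq₁ hp₁₀ hq₁₀ hpq) A
  have hsqueeze := cube_mul_card_mul_card_le_of_convex p₁ q₁ hs hp₁s hq₁s hWs hFs
    (B := B.image p₂.eval) (C := B.image q₂.eval)
    (add_subset_add_right (image_subset_image hFA)) (add_subset_add_right (image_subset_image hFA))
  refine one_div_mul_rpow_five_halves_le (by positivity) (by positivity) (by positivity) ?_
  exact_mod_cast pow_five_le_sq
    (card_le_mul_card_image_add hp₁ hp₁δ A (hB₀.image _))
    (card_le_mul_card_image_add hq₁ hq₁δ A (hB₀.image _))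
    (hB ▸ (card_le_natDegree_mul_card_image hp₂ B).trans (Nat.mul_le_mul_right _ hp₂δ))
    (hB ▸ (card_le_natDegree_mul_card_image hq₂ B).trans (Nat.mul_le_mul_right _ hq₂δ))
    hAF hsqueeze
end
end

section
/- Let d ≥ 2 and let f, g, u_1, …, u_d, v_1, …, v_d ∈ ℝ[x] be nonconstant polynomials such that every u_i and every v_i has zero constant term. If f(u_1(x_1) + ⋯ + u_d(x_d)) = g(v_1(x_1) + ⋯ + v_d(x_d)) holds for all x_1, …, x_d ∈ ℝ, then u_i ≡_a v_i for every i ∈ {1, …, d}. -/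
noncomputable section

open Polynomial

private lemma deriv_ne_zero_aux {p : Polynomial ℝ} (hp : 0 < p.natDegree) :
    p.derivative ≠ 0 := by
  intro h
  have := Polynomial.natDegree_eq_zero_of_derivative_eq_zero h
  omega

/-- From the two-variable identity we get proportionality of the derivatives. -/
private lemma pair_key (f g p q r s : Polynomial ℝ)
    (hf : 0 < f.natDegree) (hp : 0 < p.natDegree)
    (h2 : ∀ a b : ℝ, f.eval (p.eval a + r.eval b) = g.eval (q.eval a + s.eval b)) :
    ∀ a b : ℝ, (derivative p).eval a * (derivative s).eval b
      = (derivative r).eval b * (derivative q).eval a := by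
  -- partial derivatives
  have eq1 : ∀ a b : ℝ,
      (derivative f).eval (p.eval a + r.eval b) * (derivative p).eval a
        = (derivative g).eval (q.eval a + s.eval b) * (derivative q).eval a := by
    intro a b
    have hA : HasDerivAt (fun x : ℝ => f.eval (p.eval x + r.eval b))
        ((derivative f).eval (p.eval a + r.eval b) * (derivative p).eval a) a :=
      HasDerivAt.comp a (f.hasDerivAt _) ((p.hasDerivAt a).add_const _)
    have hB : HasDerivAt (fun x : ℝ => g.eval (q.eval x + s.eval b))
        ((derivative g).eval (q.eval a + s.eval b) * (derivative q).eval a) a :=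
      HasDerivAt.comp a (g.hasDerivAt _) ((q.hasDerivAt a).add_const _)
    have hfun : (fun x : ℝ => f.eval (p.eval x + r.eval b))
        = (fun x : ℝ => g.eval (q.eval x + s.eval b)) := funext fun x => h2 x b
    rw [hfun] at hA
    exact hA.unique hB
  have eq2 : ∀ a b : ℝ,
      (derivative f).eval (p.eval a + r.eval b) * (derivative r).eval b
        = (derivative g).eval (q.eval a + s.eval b) * (derivative s).eval b := by
    intro a b
    have hA : HasDerivAt (fun x : ℝ => f.eval (p.eval a + r.eval x))
        ((derivative f).eval (p.eval a + r.eval b) * (derivative r).eval b) b :=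
      HasDerivAt.comp b (f.hasDerivAt _) ((r.hasDerivAt b).const_add _)
    have hB : HasDerivAt (fun x : ℝ => g.eval (q.eval a + s.eval x))
        ((derivative g).eval (q.eval a + s.eval b) * (derivative s).eval b) b :=
      HasDerivAt.comp b (g.hasDerivAt _) ((s.hasDerivAt b).const_add _)
    have hfun : (fun x : ℝ => f.eval (p.eval a + r.eval x))
        = (fun x : ℝ => g.eval (q.eval a + s.eval x)) := funext fun x => h2 a x
    rw [hfun] at hA
    exact hA.unique hB
  have key : ∀ a b : ℝ,
      (derivative f).eval (p.eval a + r.eval b) *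
        ((derivative p).eval a * (derivative s).eval b
          - (derivative r).eval b * (derivative q).eval a) = 0 := by
    intro a b
    linear_combination ((derivative s).eval b) * eq1 a b
      - ((derivative q).eval a) * eq2 a b
  intro a b
  -- fix b; show the polynomial identity in a
  set P : Polynomial ℝ := derivative p * C ((derivative s).eval b)
      - C ((derivative r).eval b) * derivative q with hP
  have hQne : (derivative f).comp (p + C (r.eval b)) ≠ 0 := by
    intro h
    rw [Polynomial.comp_eq_zero_iff] at h
    rcases h with h | ⟨-, h⟩
    · exact deriv_ne_zero_aux hf h
    · have := congrArg natDegree h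
      simp only [natDegree_add_C, natDegree_C] at this
      omega
  have hQfin : {x : ℝ | ((derivative f).comp (p + C (r.eval b))).IsRoot x}.Finite :=
    Polynomial.finite_setOf_isRoot hQne
  have hsub : {x : ℝ | ¬ P.IsRoot x} ⊆
      {x : ℝ | ((derivative f).comp (p + C (r.eval b))).IsRoot x} := by
    intro x hx
    simp only [Set.mem_setOf_eq, IsRoot, hP, eval_sub, eval_mul, eval_C] at hx ⊢
    rw [eval_comp, eval_add, eval_C]
    by_contra hne
    rcases mul_eq_zero.mp (key x b) with h | h
    · exact hne h
    · exact hx h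
  have hPzero : P = 0 := by
    apply Polynomial.eq_zero_of_infinite_isRoot
    have hfin : {x : ℝ | ¬ P.IsRoot x}.Finite := hQfin.subset hsub
    have : {x : ℝ | P.IsRoot x} = {x : ℝ | ¬ P.IsRoot x}ᶜ := by
      ext x; simp
    rw [this]
    exact hfin.infinite_compl
  have := congrArg (fun Q : Polynomial ℝ => Q.eval a) hPzero
  simp only [hP, eval_sub, eval_mul, eval_C, eval_zero] at this
  linarith

theorem stmt13 (d : ℕ) (hd : 2 ≤ d) (f g : Polynomial ℝ)
    (u v : Fin d → Polynomial ℝ)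
    (hf : 0 < f.natDegree) (hg : 0 < g.natDegree)
    (hu : ∀ i, 0 < (u i).natDegree) (hv : ∀ i, 0 < (v i).natDegree)
    (hu0 : ∀ i, (u i).eval 0 = 0) (hv0 : ∀ i, (v i).eval 0 = 0)
    (heq : ∀ x : Fin d → ℝ,
      f.eval (∑ i, (u i).eval (x i)) = g.eval (∑ i, (v i).eval (x i))) :
    ∀ i, EquivA (u i) (v i) := by
  intro i
  haveI : Nontrivial (Fin d) := Fin.nontrivial_iff_two_le.mpr hd
  obtain ⟨j, hji⟩ := exists_ne i
  -- two-variable specialization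
  have h2 : ∀ a b : ℝ, f.eval ((u i).eval a + (u j).eval b)
      = g.eval ((v i).eval a + (v j).eval b) := by
    intro a b
    have hx := heq (fun k => if k = i then a else if k = j then b else 0)
    have hsum : ∀ (w : Fin d → Polynomial ℝ), (∀ k, (w k).eval 0 = 0) →
        (∑ k, (w k).eval (if k = i then a else if k = j then b else 0))
          = (w i).eval a + (w j).eval b := by
      intro w hw0
      have : ∀ k, (w k).eval (if k = i then a else if k = j then b else 0)
          = (if k = i then (w i).eval a else 0) + (if k = j then (w j).eval b else 0) := by
        intro k
        by_cases hki : k = i <;> by_cases hkj : k = j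
        · exact absurd (hki ▸ hkj) hji.symm
        · subst hki; simp [hkj]
        · subst hkj; simp [hki]
        · simp [hki, hkj, hw0 k]
      rw [Finset.sum_congr rfl fun k _ => this k, Finset.sum_add_distrib]
      simp
    rw [hsum u hu0, hsum v hv0] at hx
    exact hx
  have hkey := pair_key f g (u i) (v i) (u j) (v j) hf (hu i) h2
  -- find b₀ with (derivative (v j)).eval b₀ ≠ 0
  have hvj : derivative (v j) ≠ 0 := deriv_ne_zero_aux (hv j)
  have : ∃ b₀ : ℝ, (derivative (v j)).eval b₀ ≠ 0 := by
    by_contra hall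
    push_neg at hall
    exact hvj (Polynomial.funext fun x => by simp [hall x])
  obtain ⟨b₀, hb₀⟩ := this
  set l : ℝ := (derivative (u j)).eval b₀ / (derivative (v j)).eval b₀ with hl
  have hprop : ∀ a : ℝ, (derivative (u i)).eval a = l * (derivative (v i)).eval a := by
    intro a
    have := hkey a b₀
    rw [hl]
    field_simp
    linarith
  have hl0 : l ≠ 0 := by
    intro h0
    have : derivative (u i) = 0 := Polynomial.funext fun x => by
      simp [hprop x, h0]
    exact deriv_ne_zero_aux (hu i) this
  refine ⟨l, hl0, ?_⟩
  -- D := u i - C l * v i has zero derivative and vanishes at 0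
  set D : Polynomial ℝ := u i - C l * v i with hD
  have hDder : derivative D = 0 := by
    apply Polynomial.funext
    intro x
    simp [hD, hprop x]
  have hDdeg : D.natDegree = 0 := Polynomial.natDegree_eq_zero_of_derivative_eq_zero hDder
  have hDC : D = C (D.coeff 0) := Polynomial.eq_C_of_natDegree_eq_zero hDdeg
  have hD0 : D.eval 0 = 0 := by simp [hD, hu0 i, hv0 i]
  intro x
  have : D.eval x = D.eval 0 := by rw [hDC]; simp
  rw [hD0] at this
  simp only [hD, eval_sub, eval_mul, eval_C] at this
  linarith
end
end

section
/- Let d ≥ 2 and let f, g, u_1, …, u_d, v_1, …, v_d ∈ ℝ[x] be nonconstant polynomials such that every u_i and every v_i is monic. If f(u_1(x_1) · … · u_d(x_d)) = g(v_1(x_1) · … · v_d(x_d)) holds for all x_1, …, x_d ∈ ℝ, then u_i ≡_m v_i for every i ∈ {1, …, d}. -/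
noncomputable section

/-- `p ≡_m q` : there is a positive rational `κ` with `|p(x)| = |q(x)|^κ` for all real `x`. -/
def EquivM (p q : Polynomial ℝ) : Prop :=
  ∃ k : ℚ, 0 < k ∧ ∀ x : ℝ, |p.eval x| = |q.eval x| ^ (k : ℝ)

open Polynomial Finset

lemma exists_eval_ne_zero' {p : Polynomial ℝ} (hp : p ≠ 0) : ∃ x : ℝ, p.eval x ≠ 0 := by
  by_contra h
  push_neg at h
  exact hp (Polynomial.funext (by simpa using h))

lemma key_lc (f g p q : Polynomial ℝ) (hp : p.natDegree ≠ 0) (hq : q.natDegree ≠ 0)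
    (hpm : p.Monic) (hqm : q.Monic)
    {c c' : ℝ} (hc : c ≠ 0) (hc' : c' ≠ 0)
    (h : ∀ x : ℝ, f.eval (c * p.eval x) = g.eval (c' * q.eval x)) :
    f.leadingCoeff * c ^ f.natDegree = g.leadingCoeff * c' ^ g.natDegree := by
  have hcomp : f.comp (Polynomial.C c * p) = g.comp (Polynomial.C c' * q) := by
    apply Polynomial.funext
    intro r
    simpa [Polynomial.eval_comp] using h r
  have h1 : (Polynomial.C c * p).natDegree ≠ 0 := by
    rwa [Polynomial.natDegree_C_mul hc]
  have h2 : (Polynomial.C c' * q).natDegree ≠ 0 := by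
    rwa [Polynomial.natDegree_C_mul hc']
  have := congrArg Polynomial.leadingCoeff hcomp
  simp only [Polynomial.leadingCoeff_comp h1, Polynomial.leadingCoeff_comp h2,
    Polynomial.leadingCoeff_mul, Polynomial.leadingCoeff_C,
    hpm.leadingCoeff, hqm.leadingCoeff, mul_one] at this
  exact this

theorem stmt14 (d : ℕ) (hd : 2 ≤ d) (f g : Polynomial ℝ)
    (u v : Fin d → Polynomial ℝ)
    (hf : 0 < f.natDegree) (hg : 0 < g.natDegree)
    (hu : ∀ i, 0 < (u i).natDegree) (hv : ∀ i, 0 < (v i).natDegree)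
    (humonic : ∀ i, (u i).Monic) (hvmonic : ∀ i, (v i).Monic)
    (heq : ∀ x : Fin d → ℝ,
      f.eval (∏ i, (u i).eval (x i)) = g.eval (∏ i, (v i).eval (x i))) :
    ∀ i, EquivM (u i) (v i) := by
  classical
  intro i
  haveI : Nontrivial (Fin d) := ⟨⟨0, by omega⟩, ⟨1, by omega⟩, by simp [Fin.ext_iff]⟩
  obtain ⟨i', hii'⟩ := exists_ne i
  set n := f.natDegree with hn
  set m := g.natDegree with hm
  -- base point where all u j, v j are nonzero
  have hbase : ∀ j : Fin d, ∃ t : ℝ, (u j).eval t ≠ 0 ∧ (v j).eval t ≠ 0 := by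
    intro j
    have h0 : (u j) * (v j) ≠ 0 := mul_ne_zero (humonic j).ne_zero (hvmonic j).ne_zero
    obtain ⟨t, ht⟩ := exists_eval_ne_zero' h0
    rw [Polynomial.eval_mul, mul_ne_zero_iff] at ht
    exact ⟨t, ht⟩
  choose w₀ hw₀u hw₀v using hbase
  set Ku : ℝ := ∏ j ∈ (univ \ {i'}) \ {i}, (u j).eval (w₀ j) with hKu
  set Kv : ℝ := ∏ j ∈ (univ \ {i'}) \ {i}, (v j).eval (w₀ j) with hKv
  have hKune : Ku ≠ 0 := prod_ne_zero_iff.mpr fun j _ => hw₀u j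
  have hKvne : Kv ≠ 0 := prod_ne_zero_iff.mpr fun j _ => hw₀v j
  have hrel : ∀ y : ℝ, (u i).eval y ≠ 0 → (v i).eval y ≠ 0 →
      f.leadingCoeff * ((u i).eval y * Ku) ^ n
      = g.leadingCoeff * ((v i).eval y * Kv) ^ m := by
    intro y hyu hyv
    set w : Fin d → ℝ := Function.update w₀ i y with hwdef
    have hwj : ∀ j, (u j).eval (w j) ≠ 0 ∧ (v j).eval (w j) ≠ 0 := by
      intro j
      by_cases hj : j = i
      · subst hj; simp [hwdef, hyu, hyv]
      · simp [hwdef, Function.update_of_ne hj, hw₀u j, hw₀v j]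
    set c : ℝ := ∏ j ∈ univ \ {i'}, (u j).eval (w j) with hcdef
    set c' : ℝ := ∏ j ∈ univ \ {i'}, (v j).eval (w j) with hc'def
    have hc : c ≠ 0 := prod_ne_zero_iff.mpr fun j _ => (hwj j).1
    have hc' : c' ≠ 0 := prod_ne_zero_iff.mpr fun j _ => (hwj j).2
    have hmain : f.leadingCoeff * c ^ n = g.leadingCoeff * c' ^ m := by
      apply key_lc f g (u i') (v i') (hu i').ne' (hv i').ne' (humonic i') (hvmonic i') hc hc'
      intro x
      have hprodu : ∏ j, (u j).eval (Function.update w i' x j)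
          = (u i').eval x * c := by
        have hfun : (fun j => (u j).eval (Function.update w i' x j))
            = Function.update (fun j => (u j).eval (w j)) i' ((u i').eval x) := by
          funext j
          by_cases hj : j = i'
          · subst hj; simp
          · simp [Function.update_of_ne hj]
        rw [hfun, Finset.prod_update_of_mem (Finset.mem_univ i')]
      have hprodv : ∏ j, (v j).eval (Function.update w i' x j)
          = (v i').eval x * c' := by
        have hfun : (fun j => (v j).eval (Function.update w i' x j))
            = Function.update (fun j => (v j).eval (w j)) i' ((v i').eval x) := by
          funext j
          by_cases hj : j = i'
          · subst hj; simp
          · simp [Function.update_of_ne hj]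
        rw [hfun, Finset.prod_update_of_mem (Finset.mem_univ i')]
      have := heq (Function.update w i' x)
      rw [hprodu, hprodv] at this
      rw [mul_comm c _, mul_comm c' _]
      exact this
    have hcsplit : c = (u i).eval y * Ku := by
      rw [hcdef, Finset.prod_eq_mul_prod_sdiff_singleton_of_mem
        (by simp [hii'.symm] : i ∈ univ \ {i'}) (fun j => (u j).eval (w j))]
      congr 1
      · simp [hwdef]
      · apply Finset.prod_congr rfl
        intro j hj
        have : j ≠ i := by simp at hj; tauto
        simp [hwdef, Function.update_of_ne this]
    have hc'split : c' = (v i).eval y * Kv := by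
      rw [hc'def, Finset.prod_eq_mul_prod_sdiff_singleton_of_mem
        (by simp [hii'.symm] : i ∈ univ \ {i'}) (fun j => (v j).eval (w j))]
      congr 1
      · simp [hwdef]
      · apply Finset.prod_congr rfl
        intro j hj
        have : j ≠ i := by simp at hj; tauto
        simp [hwdef, Function.update_of_ne this]
    rw [hcsplit, hc'split] at hmain
    exact hmain
  -- polynomial identity
  have hfne : f.leadingCoeff ≠ 0 := by
    intro h
    rw [Polynomial.leadingCoeff_eq_zero] at h
    rw [hn, h] at hf
    simp at hf
  have hgne : g.leadingCoeff ≠ 0 := by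
    intro h
    rw [Polynomial.leadingCoeff_eq_zero] at h
    rw [hm, h] at hg
    simp at hg
  have hPQ : Polynomial.C (f.leadingCoeff * Ku ^ n) * (u i) ^ n
      = Polynomial.C (g.leadingCoeff * Kv ^ m) * (v i) ^ m := by
    apply Polynomial.eq_of_infinite_eval_eq
    have hsub : {y : ℝ | ((u i) * (v i)).IsRoot y}ᶜ ⊆
        {y : ℝ | Polynomial.eval y (Polynomial.C (f.leadingCoeff * Ku ^ n) * (u i) ^ n)
          = Polynomial.eval y (Polynomial.C (g.leadingCoeff * Kv ^ m) * (v i) ^ m)} := by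
      intro y hy
      simp only [Set.mem_compl_iff, Set.mem_setOf_eq, Polynomial.IsRoot,
        Polynomial.eval_mul, mul_eq_zero, not_or] at hy
      have := hrel y hy.1 hy.2
      simp only [Set.mem_setOf_eq, Polynomial.eval_mul, Polynomial.eval_C,
        Polynomial.eval_pow]
      rw [mul_pow, mul_pow] at this
      linarith [this]
    exact Set.Infinite.mono hsub
      ((Polynomial.finite_setOf_isRoot
        (mul_ne_zero (humonic i).ne_zero (hvmonic i).ne_zero)).infinite_compl)
  have hlc := congrArg Polynomial.leadingCoeff hPQ
  rw [Polynomial.leadingCoeff_mul, Polynomial.leadingCoeff_mul,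
    Polynomial.leadingCoeff_C, Polynomial.leadingCoeff_C,
    ((humonic i).pow n).leadingCoeff, ((hvmonic i).pow m).leadingCoeff,
    mul_one, mul_one] at hlc
  have hAne : f.leadingCoeff * Ku ^ n ≠ 0 := mul_ne_zero hfne (pow_ne_zero _ hKune)
  rw [← hlc] at hPQ
  have hP : (u i) ^ n = (v i) ^ m :=
    mul_left_cancel₀ (Polynomial.C_ne_zero.mpr hAne) hPQ
  -- conclude
  refine ⟨(m : ℚ) / (n : ℚ), by
    apply div_pos <;> exact_mod_cast (by omega : 0 < _), ?_⟩
  intro x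
  have h1 : |(u i).eval x| ^ n = |(v i).eval x| ^ m := by
    have := congrArg (fun p => |Polynomial.eval x p|) hP
    simpa [abs_pow] using this
  set a := |(u i).eval x| with ha
  set b := |(v i).eval x| with hb
  have ha0 : 0 ≤ a := abs_nonneg _
  have hb0 : 0 ≤ b := abs_nonneg _
  have hnne : (n : ℝ) ≠ 0 := Nat.cast_ne_zero.mpr hf.ne'
  have hk : (((m : ℚ) / (n : ℚ) : ℚ) : ℝ) = (m : ℝ) / (n : ℝ) := by push_cast; ring
  rw [hk, div_eq_mul_inv, Real.rpow_mul hb0, Real.rpow_natCast, ← h1,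
    ← Real.rpow_natCast a n, ← Real.rpow_mul ha0, mul_inv_cancel₀ hnne, Real.rpow_one]
end
end

section
/- Let d ≥ 1 be an integer and let ≡ be an equivalence relation on the set {1, 2, …, d}. Let t ∈ {1, …, d} and assume that for every permutation σ of {1, …, d} there exists a subset I_σ ⊆ {1, …, d} with |I_σ| = t such that i ≡ σ(i) for all i ∈ I_σ. Then there exists at least one equivalence class of ≡ whose cardinality is at least ⌈(d + t)/2⌉. -/
noncomputable section

theorem stmt15 (d : ℕ) (hd : 1 ≤ d)
    (r : Fin d → Fin d → Prop) (hr : Equivalence r)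
    (t : ℕ) (ht1 : 1 ≤ t) (ht2 : t ≤ d)
    (h : ∀ σ : Equiv.Perm (Fin d),
      ∃ I : Finset (Fin d), I.card = t ∧ ∀ i ∈ I, r i (σ i)) :
    ∃ i : Fin d, (d + t + 1) / 2 ≤ ({j : Fin d | r i j} : Set (Fin d)).ncard := by
  classical
  haveI : NeZero d := ⟨by omega⟩
  set C : Fin d → Finset (Fin d) := fun i => Finset.univ.filter (fun j => r i j) with hC
  have hmemC : ∀ i j, j ∈ C i ↔ r i j := by intro i j; simp [hC]
  have hCne : ∀ i, (C i).Nonempty := fun i => ⟨i, (hmemC i i).2 (hr.refl i)⟩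
  set rep : Fin d → Fin d := fun i => (C i).min' (hCne i) with hrep
  have hCeq : ∀ i j, r i j → C i = C j := by
    intro i j hij; ext k
    simp only [hmemC]
    exact ⟨fun hk => hr.trans (hr.symm hij) hk, fun hk => hr.trans hij hk⟩
  have hrepr : ∀ i, r i (rep i) := fun i => (hmemC i _).1 ((C i).min'_mem (hCne i))
  have key : ∀ i j, r i j ↔ rep i = rep j := by
    intro i j
    constructor
    · intro hij; simp only [hrep]; congr 1; exact hCeq i j hij
    · intro hij
      refine hr.trans (hrepr i) ?_
      rw [hij]
      exact hr.symm (hrepr j)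
  -- max class
  obtain ⟨i0, -, hi0⟩ := Finset.exists_max_image Finset.univ (fun i => (C i).card)
    ⟨⟨0, by omega⟩, Finset.mem_univ _⟩
  set m : ℕ := (C i0).card with hm
  have hmax : ∀ i, (C i).card ≤ m := fun i => hi0 i (Finset.mem_univ i)
  have hm1 : 1 ≤ m := Finset.card_pos.2 (hCne i0)
  have hmd : m ≤ d := by
    calc m ≤ Finset.univ.card := Finset.card_le_card (Finset.subset_univ _)
    _ = d := by simp
  have hfinal : d + t ≤ 2 * m → ∃ i : Fin d, (d + t + 1) / 2 ≤
      ({j : Fin d | r i j} : Set (Fin d)).ncard := by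
    intro hdt
    refine ⟨i0, ?_⟩
    have : ({j : Fin d | r i0 j} : Set (Fin d)) = ↑(C i0) := by
      ext j; simp [hC]
    rw [this, Set.ncard_coe_finset]
    omega
  by_cases hcase : d ≤ m
  · exact hfinal (by omega)
  push_neg at hcase
  -- sort by rep
  set τ : Equiv.Perm (Fin d) := Tuple.sort rep with hτ
  set F : Fin d → Fin d := rep ∘ τ with hF
  have hmono : Monotone F := Tuple.monotone_sort rep
  -- fibers
  set Fib : Fin d → Finset (Fin d) := fun p => Finset.univ.filter (fun q => F q = F p) with hFib
  have hFibeq : ∀ p, Fib p = (C (τ p)).image τ.symm := by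
    intro p
    ext q
    simp only [hFib, Finset.mem_filter, Finset.mem_univ, true_and, Finset.mem_image, hmemC]
    constructor
    · intro hq
      exact ⟨τ q, (key _ _).2 ((show F p = F q from hq.symm)), by simp⟩
    · rintro ⟨a, ha, rfl⟩
      have : a = τ (τ.symm a) := by simp
      rw [this] at ha
      exact ((key _ _).1 ha).symm
  have hFibcard : ∀ p, (Fib p).card ≤ m := by
    intro p
    rw [hFibeq, Finset.card_image_of_injective _ τ.symm.injective]
    exact hmax _
  have hFibconst : ∀ p x, F x = F p → Fib x = Fib p := by
    intro p x hx
    ext q; simp [hFib, hx]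
  have hIcc : ∀ p q : Fin d, p ≤ q → F p = F q → Finset.Icc p q ⊆ Fib p := by
    intro p q hpq hFpq x hx
    rw [Finset.mem_Icc] at hx
    simp only [hFib, Finset.mem_filter, Finset.mem_univ, true_and]
    exact le_antisymm (hFpq ▸ hmono hx.2) (hmono hx.1)
  -- shift by m
  set c : Fin d := ⟨m, hcase⟩ with hc
  set σ : Equiv.Perm (Fin d) := (τ.symm.trans (Equiv.addRight c)).trans τ with hσ
  obtain ⟨I, hIcard, hI⟩ := h σ
  set I' : Finset (Fin d) := I.image τ.symm with hI'
  have hI'card : I'.card = t := by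
    rw [hI', Finset.card_image_of_injective _ τ.symm.injective, hIcard]
  have hI'ne : I'.Nonempty := Finset.card_pos.1 (by omega)
  have hstuck : ∀ p ∈ I', F p = F (p + c) := by
    intro p hp
    rw [hI', Finset.mem_image] at hp
    obtain ⟨i, hi, rfl⟩ := hp
    have := hI i hi
    have hσi : σ i = τ (τ.symm i + c) := by simp [hσ, Equiv.addRight]
    rw [hσi] at this
    have := (key _ _).1 this
    simpa [hF] using this
  -- key bound: every stuck point wraps
  have hwrap : ∀ p ∈ I', d ≤ p.val + m := by
    intro p hp
    by_contra hlt
    push_neg at hlt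
    have hval : (p + c).val = p.val + m := by
      rw [Fin.add_def]
      exact Nat.mod_eq_of_lt hlt
    have hle : p ≤ p + c := by rw [Fin.le_def, hval]; omega
    have hsub := hIcc p (p + c) hle (hstuck p hp)
    have := Finset.card_le_card hsub
    rw [Fin.card_Icc, hval] at this
    have := hFibcard p
    omega
  have hval' : ∀ p ∈ I', (p + c).val = p.val + m - d := by
    intro p hp
    rw [Fin.add_def]
    show (p.val + m) % d = p.val + m - d
    have h1 : d ≤ p.val + m := hwrap p hp
    have h2 : p.val + m - d < d := by have := p.isLt; omega
    rw [Nat.mod_eq_sub_mod h1, Nat.mod_eq_of_lt h2]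
  -- each stuck fiber is big
  have hbig : ∀ p ∈ I', d - m + 1 ≤ (Fib p).card := by
    intro p hp
    have hle : p + c ≤ p := by
      rw [Fin.le_def, hval' p hp]; omega
    have hsub := hIcc (p + c) p hle (hstuck p hp).symm
    have hsub' : Finset.Icc (p + c) p ⊆ Fib p := by
      rw [← hFibconst p (p + c) (hstuck p hp).symm]; exact hsub
    have := Finset.card_le_card hsub'
    rw [Fin.card_Icc, hval' p hp] at this
    have := hwrap p hp
    omega
  -- all stuck points in same fiber
  have hsame : ∀ p ∈ I', ∀ q ∈ I', F p = F q := by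
    intro p hp q hq
    by_contra hne
    have hdisj : Disjoint (Fib p) (Fib q) := by
      rw [Finset.disjoint_left]
      intro x hxp hxq
      simp only [hFib, Finset.mem_filter, Finset.mem_univ, true_and] at hxp hxq
      exact hne (hxp ▸ hxq ▸ rfl)
    set p0 : Fin d := τ.symm i0 with hp0
    have hFp0card : (Fib p0).card = m := by
      rw [hFibeq, Finset.card_image_of_injective _ τ.symm.injective, hp0,
        Equiv.apply_symm_apply]
    by_cases h1 : F p0 = F p
    · have heq : Fib p0 = Fib p := hFibconst p p0 h1
      have hpm : (Fib p).card = m := by rw [← heq]; exact hFp0card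
      have hcard := Finset.card_le_card (Finset.union_subset (Finset.subset_univ (Fib p))
        (Finset.subset_univ (Fib q)) : Fib p ∪ Fib q ⊆ Finset.univ)
      rw [Finset.card_union_of_disjoint hdisj] at hcard
      simp only [Finset.card_univ, Fintype.card_fin] at hcard
      have := hbig q hq
      omega
    · by_cases h2 : F p0 = F q
      · have heq : Fib p0 = Fib q := hFibconst q p0 h2
        have hqm : (Fib q).card = m := by rw [← heq]; exact hFp0card
        have hcard := Finset.card_le_card (Finset.union_subset (Finset.subset_univ (Fib p))
          (Finset.subset_univ (Fib q)) : Fib p ∪ Fib q ⊆ Finset.univ)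
        rw [Finset.card_union_of_disjoint hdisj] at hcard
        simp only [Finset.card_univ, Fintype.card_fin] at hcard
        have := hbig p hp
        omega
      · have hd1 : Disjoint (Fib p0) (Fib p) := by
          rw [Finset.disjoint_left]
          intro x hx0 hxp
          simp only [hFib, Finset.mem_filter, Finset.mem_univ, true_and] at hx0 hxp
          exact h1 (hx0 ▸ hxp ▸ rfl)
        have hd2 : Disjoint (Fib p0) (Fib q) := by
          rw [Finset.disjoint_left]
          intro x hx0 hxq
          simp only [hFib, Finset.mem_filter, Finset.mem_univ, true_and] at hx0 hxq
          exact h2 (hx0 ▸ hxq ▸ rfl)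
        have hcard := Finset.card_le_card (Finset.subset_univ (Fib p0 ∪ Fib p ∪ Fib q))
        rw [Finset.card_union_of_disjoint (by
          rw [Finset.disjoint_union_left]; exact ⟨hd2, hdisj⟩),
          Finset.card_union_of_disjoint hd1] at hcard
        simp only [Finset.card_univ, Fintype.card_fin] at hcard
        have hb1 := hbig p hp
        have hb2 := hbig q hq
        omega
  -- conclude
  set pmin : Fin d := I'.min' hI'ne with hpmin
  set pmax : Fin d := I'.max' hI'ne with hpmax
  have hminmem := I'.min'_mem hI'ne
  have hmaxmem := I'.max'_mem hI'ne
  have hFmm : F pmin = F pmax := hsame _ hminmem _ hmaxmem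
  have hle1 : pmin + c ≤ pmax := by
    rw [Fin.le_def, hval' pmin hminmem]
    have : pmin ≤ pmax := I'.min'_le _ hmaxmem
    rw [Fin.le_def] at this
    omega
  have hsub1 : Finset.Icc (pmin + c) pmax ⊆ Fib pmin := by
    have hEq : F (pmin + c) = F pmax := by rw [← hstuck pmin hminmem, hFmm]
    have hs := hIcc (pmin + c) pmax hle1 hEq
    rwa [hFibconst pmin (pmin + c) (hstuck pmin hminmem).symm] at hs
  have hbound1 := Finset.card_le_card hsub1
  rw [Fin.card_Icc, hval' pmin hminmem] at hbound1
  have hFc := hFibcard pmin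
  have hsub2 : I' ⊆ Finset.Icc pmin pmax := by
    intro x hx
    rw [Finset.mem_Icc]
    exact ⟨I'.min'_le x hx, I'.le_max' x hx⟩
  have hbound2 := Finset.card_le_card hsub2
  rw [Fin.card_Icc, hI'card] at hbound2
  have hw := hwrap pmin hminmem
  have hpminlt := pmin.isLt
  have hpmaxlt := pmax.isLt
  exact hfinal (by omega)
end
end

section
/- Let d ≥ 2. There do NOT exist nonconstant univariate real polynomials f, g, u_1, …, u_d, w_1, …, w_d such that f(u_1(x_1) + ⋯ + u_d(x_d)) = g(w_1(x_1) · … · w_d(x_d)) holds for all x_1, …, x_d ∈ ℝ. In other words, a polynomial P ∈ ℝ[x_1,…,x_d] cannot simultaneously be of additive form f(u_1(x_1)+⋯+u_d(x_d)) and of multiplicative form g(w_1(x_1)·…·w_d(x_d)) with all the inner polynomials nonconstant. -/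
noncomputable section

open Polynomial

private lemma aux19 (f g u v w₀ w₁ : Polynomial ℝ) (c : ℝ) (hc : c ≠ 0)
    (hf : 0 < f.natDegree) (hg : 0 < g.natDegree)
    (hu : 0 < u.natDegree) (hw0 : 0 < w₀.natDegree) (hw1 : 0 < w₁.natDegree)
    (h : ∀ x y : ℝ, f.eval (u.eval x + v.eval y) = g.eval (c * w₀.eval x * w₁.eval y)) :
    False := by
  have hgne : g ≠ 0 := fun h0 => by simp [h0] at hg
  have hw0ne : w₀ ≠ 0 := fun h0 => by simp [h0] at hw0
  have hw1ne : w₁ ≠ 0 := fun h0 => by simp [h0] at hw1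
  have key : ∀ y : ℝ, f.comp (u + C (v.eval y)) = g.comp (C (c * w₁.eval y) * w₀) := by
    intro y
    apply Polynomial.funext
    intro x
    simp only [eval_comp, eval_add, eval_mul, eval_C]
    rw [h x y]; ring_nf
  set n := g.natDegree with hn
  set b := f.leadingCoeff * u.leadingCoeff ^ f.natDegree with hb
  set a := g.leadingCoeff * (c * w₀.leadingCoeff) ^ n with ha
  have lc2 : ∀ y : ℝ, w₁.eval y ≠ 0 → b = a * (w₁.eval y) ^ n := by
    intro y hy
    have hA : c * w₁.eval y ≠ 0 := mul_ne_zero hc hy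
    have h1 : (u + C (v.eval y)).natDegree ≠ 0 := by
      rw [natDegree_add_C]; omega
    have h2 : (C (c * w₁.eval y) * w₀).natDegree ≠ 0 := by
      rw [natDegree_C_mul hA]; omega
    have e1 := leadingCoeff_comp (p := f) h1
    have e2 := leadingCoeff_comp (p := g) h2
    have lcu : (u + C (v.eval y)).leadingCoeff = u.leadingCoeff := by
      rw [add_comm]
      apply leadingCoeff_add_of_degree_lt
      calc (C (v.eval y)).degree ≤ 0 := degree_C_le
        _ < u.degree := natDegree_pos_iff_degree_pos.mp hu
    have lcw : (C (c * w₁.eval y) * w₀).leadingCoeff = (c * w₁.eval y) * w₀.leadingCoeff := by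
      rw [leadingCoeff_mul, leadingCoeff_C]
    have := congrArg leadingCoeff (key y)
    rw [e1, e2, lcu, lcw] at this
    rw [hb, ha, this]; ring
  have hR : w₁ * (C a * w₁ ^ n - C b) = 0 := by
    apply Polynomial.funext
    intro y
    simp only [eval_mul, eval_sub, eval_C, eval_pow, eval_zero]
    by_cases hy : w₁.eval y = 0
    · simp [hy]
    · rw [lc2 y hy]; ring
  have hR2 : C a * w₁ ^ n - C b = 0 := by
    rcases mul_eq_zero.mp hR with h' | h'
    · exact absurd h' hw1ne
    · exact h'
  have hane : a ≠ 0 := by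
    apply mul_ne_zero (leadingCoeff_ne_zero.mpr hgne)
    exact pow_ne_zero _ (mul_ne_zero hc (leadingCoeff_ne_zero.mpr hw0ne))
  have hdeg := congrArg natDegree (sub_eq_zero.mp hR2)
  rw [natDegree_C_mul hane, natDegree_pow, natDegree_C] at hdeg
  have : n * w₁.natDegree = 0 := hdeg
  rcases Nat.mul_eq_zero.mp this with h' | h' <;> omega

theorem stmt19 (d : ℕ) (hd : 2 ≤ d) :
    ¬ ∃ (f g : Polynomial ℝ) (u w : Fin d → Polynomial ℝ),
        0 < f.natDegree ∧ 0 < g.natDegree ∧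
        (∀ i, 0 < (u i).natDegree) ∧ (∀ i, 0 < (w i).natDegree) ∧
        ∀ x : Fin d → ℝ,
          f.eval (∑ i, (u i).eval (x i)) = g.eval (∏ i, (w i).eval (x i)) := by
  rintro ⟨f, g, u, w, hf, hg, hu, hw, h⟩
  set i0 : Fin d := ⟨0, by omega⟩ with hi0
  set i1 : Fin d := ⟨1, by omega⟩ with hi1
  have h01 : i0 ≠ i1 := by simp [hi0, hi1, Fin.ext_iff]
  have hwne : ∀ i, w i ≠ 0 := fun i h0 => by
    have := hw i; rw [h0] at this; simp at this
  have ha : ∀ i : Fin d, ∃ t : ℝ, (w i).eval t ≠ 0 := by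
    intro i
    by_contra hcon
    push_neg at hcon
    exact (hwne i) (Polynomial.funext (fun r => by simp [hcon r]))
  choose a haa using ha
  set s : Finset (Fin d) := {i0, i1} with hs
  set p : ℝ → ℝ → Fin d → ℝ := fun x y i => if i = i0 then x else if i = i1 then y else a i with hp
  have hmem : ∀ i, i ∈ Finset.univ \ s → i ≠ i0 ∧ i ≠ i1 := by
    intro i hi
    simp only [hs, Finset.mem_sdiff, Finset.mem_insert, Finset.mem_singleton] at hi
    push_neg at hi
    exact hi.2
  have hp0 : ∀ x y, p x y i0 = x := by intro x y; simp [hp]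
  have hp1 : ∀ x y, p x y i1 = y := by intro x y; simp [hp, h01.symm]
  set c₀ : ℝ := ∑ i ∈ Finset.univ \ s, (u i).eval (a i) with hc₀
  set c : ℝ := ∏ i ∈ Finset.univ \ s, (w i).eval (a i) with hc
  have hcne : c ≠ 0 := by
    rw [hc]
    exact Finset.prod_ne_zero_iff.mpr (fun i _ => haa i)
  have hsum : ∀ x y : ℝ, ∑ i, (u i).eval (p x y i)
      = (u i0).eval x + ((u i1).eval y + c₀) := by
    intro x y
    rw [← Finset.sum_sdiff (Finset.subset_univ s)]
    have h2 : ∑ i ∈ s, (u i).eval (p x y i) = (u i0).eval x + (u i1).eval y := by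
      rw [hs, Finset.sum_pair h01, hp0, hp1]
    have h3 : ∑ i ∈ Finset.univ \ s, (u i).eval (p x y i)
        = ∑ i ∈ Finset.univ \ s, (u i).eval (a i) := by
      apply Finset.sum_congr rfl
      intro i hi
      obtain ⟨hi0', hi1'⟩ := hmem i hi
      simp [hp, hi0', hi1']
    rw [h2, h3, ← hc₀]; ring
  have hprod : ∀ x y : ℝ, ∏ i, (w i).eval (p x y i)
      = c * (w i0).eval x * (w i1).eval y := by
    intro x y
    rw [← Finset.prod_sdiff (Finset.subset_univ s)]
    have h2 : ∏ i ∈ s, (w i).eval (p x y i) = (w i0).eval x * (w i1).eval y := by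
      rw [hs, Finset.prod_pair h01, hp0, hp1]
    have h3 : ∏ i ∈ Finset.univ \ s, (w i).eval (p x y i)
        = ∏ i ∈ Finset.univ \ s, (w i).eval (a i) := by
      apply Finset.prod_congr rfl
      intro i hi
      obtain ⟨hi0', hi1'⟩ := hmem i hi
      simp [hp, hi0', hi1']
    rw [h2, h3, ← hc]; ring
  apply aux19 f g (u i0) (u i1 + C c₀) (w i0) (w i1) c hcne hf hg (hu i0) (hw i0) (hw i1)
  intro x y
  have := h (p x y)
  rw [hsum, hprod] at this
  simpa using this
end
end
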